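/- arXiv:2506.13033 — 8 statements merged into one kernel-verified Lean document; each statement's English description precedes it below -/
import Mathlib

section
/- Let d ≥ 1, let f ∈ F(L,m) with unique minimizer x*, and let L̄ ≥ L with κ̄ = L̄/m > 1. Let x_t = y_t ∈ ℝ^d, and set y_{t+1} = x_t − (1/L̄)∇f(x_t) and x_{t+1} = y_{t+1} (a gradient-descent step). Then (1 + δ^GD) W(x_{t+1}, y_{t+1}) − W(x_t, y_t) ≤ −(1/(2L̄)) ‖∇f(x_t)‖², where δ^GD = 1/(κ̄ − 1). -/
open scoped RealInnerProductSpace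

/-!
On the diagonal `x = y` the Lyapunov function is `f(x) − f(x*) + (m/2)‖x − x*‖²`. A gradient
step with step size `1/L̄` lowers `f` by at least `‖∇f(x)‖²/(2L̄)` (descent lemma), and strong
convexity gives `f(x) − f(x*) ≤ ⟪∇f(x), x − x*⟫ − (m/2)‖x − x*‖²`. Since
`(1 + δ) m / L̄ = δ` for `δ = 1/(κ̄ − 1)`, the cross terms `⟪∇f(x), x − x*⟫` cancel when the
descent inequality is weighted by `1 + δ` and the strong-convexity one by `δ`.
-/

/-- The Lyapunov function `W(x, y) = f(y) − f(x*) + (m/2)‖x + √κ̄ (x − y) − x*‖²`. -/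
noncomputable def lyapW {d : ℕ} (f : EuclideanSpace ℝ (Fin d) → ℝ)
    (xstar : EuclideanSpace ℝ (Fin d)) (m κ : ℝ)
    (x y : EuclideanSpace ℝ (Fin d)) : ℝ :=
  f y - f xstar + m / 2 * ‖x + Real.sqrt κ • (x - y) - xstar‖ ^ 2

section GradientStep

variable {E : Type*} [NormedAddCommGroup E] [InnerProductSpace ℝ E] [CompleteSpace E]

theorem apply_sub_smul_gradient_le {f : E → ℝ} {L Lbar : ℝ} (hLbar : 0 < Lbar) (hLLbar : L ≤ Lbar)
    (hsmooth : ∀ x y : E, f y ≤ f x + ⟪gradient f x, y - x⟫ + L / 2 * ‖y - x‖ ^ 2) (x : E) :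
    f (x - (1 / Lbar) • gradient f x) ≤ f x - 1 / (2 * Lbar) * ‖gradient f x‖ ^ 2 := by
  have h := hsmooth x (x - (1 / Lbar) • gradient f x)
  rw [sub_sub_cancel_left, inner_neg_right, real_inner_smul_right, real_inner_self_eq_norm_sq,
    norm_neg, norm_smul, mul_pow, Real.norm_eq_abs, sq_abs] at h
  have hL : L / 2 * ((1 / Lbar) ^ 2 * ‖gradient f x‖ ^ 2)
      ≤ Lbar / 2 * ((1 / Lbar) ^ 2 * ‖gradient f x‖ ^ 2) := by gcongr
  have hLbar_eq : Lbar / 2 * ((1 / Lbar) ^ 2 * ‖gradient f x‖ ^ 2)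
      = 1 / Lbar * ‖gradient f x‖ ^ 2 - 1 / (2 * Lbar) * ‖gradient f x‖ ^ 2 := by
    field_simp; ring
  linarith

theorem sub_le_inner_gradient_sub {f : E → ℝ} {m : ℝ}
    (hstrong : ∀ x y : E, f x + ⟪gradient f x, y - x⟫ + m / 2 * ‖y - x‖ ^ 2 ≤ f y)
    (x xstar : E) :
    f x - f xstar ≤ ⟪gradient f x, x - xstar⟫ - m / 2 * ‖x - xstar‖ ^ 2 := by
  have h := hstrong x xstar
  rw [← neg_sub x xstar, inner_neg_right, norm_neg] at h
  linarith

end GradientStep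

theorem norm_sub_smul_sub_sq {E : Type*} [NormedAddCommGroup E] [InnerProductSpace ℝ E]
    (x g xstar : E) (c : ℝ) :
    ‖x - c • g - xstar‖ ^ 2
      = ‖x - xstar‖ ^ 2 - 2 * c * ⟪g, x - xstar⟫ + c ^ 2 * ‖g‖ ^ 2 := by
  rw [sub_right_comm, norm_sub_sq_real, real_inner_smul_right, norm_smul, mul_pow,
    Real.norm_eq_abs, sq_abs, real_inner_comm]
  ring

theorem lyapW_self {d : ℕ} (f : EuclideanSpace ℝ (Fin d) → ℝ) (xstar : EuclideanSpace ℝ (Fin d))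
    (m κ : ℝ) (x : EuclideanSpace ℝ (Fin d)) :
    lyapW f xstar m κ x x = f x - f xstar + m / 2 * ‖x - xstar‖ ^ 2 := by
  simp only [lyapW, sub_self, smul_zero, add_zero]

theorem gd_lyapunov_decrease_of_bounds {m Lbar F₀ F₁ D I G : ℝ} (hm : 0 < m) (hmLbar : m < Lbar)
    (hdescent : F₁ ≤ F₀ - 1 / (2 * Lbar) * G) (hstrong : F₀ ≤ I - m / 2 * D) :
    (1 + 1 / (Lbar / m - 1)) * (F₁ + m / 2 * (D - 2 * (1 / Lbar) * I + (1 / Lbar) ^ 2 * G))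
        - (F₀ + m / 2 * D)
      ≤ -(1 / (2 * Lbar)) * G := by
  have hLbar : 0 < Lbar := hm.trans hmLbar
  have hgap : 0 < Lbar - m := sub_pos.mpr hmLbar
  have hδ : 1 / (Lbar / m - 1) = m / (Lbar - m) := by
    rw [div_sub_one hm.ne', one_div_div]
  rw [hδ]
  have hA := mul_le_mul_of_nonneg_left hdescent (by positivity : (0 : ℝ) ≤ 1 + m / (Lbar - m))
  have hB := mul_le_mul_of_nonneg_left hstrong (by positivity : (0 : ℝ) ≤ m / (Lbar - m))
  have hcancel : m / (Lbar - m) * (I - m / 2 * D)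
      + (1 + m / (Lbar - m)) * (m / 2) * (D - 2 * (1 / Lbar) * I + (1 / Lbar) ^ 2 * G)
      - m / 2 * D - (1 + m / (Lbar - m)) * (1 / (2 * Lbar)) * G
      = -(1 / (2 * Lbar)) * G := by
    field_simp
    ring
  linarith

theorem stmt2_general
    {d : ℕ}
    {L m : ℝ} (hm : 0 < m)
    (f : EuclideanSpace ℝ (Fin d) → ℝ)
    (hsmooth : ∀ x y : EuclideanSpace ℝ (Fin d),
      f y ≤ f x + ⟪gradient f x, y - x⟫ + L / 2 * ‖y - x‖ ^ 2)
    (hstrong : ∀ x y : EuclideanSpace ℝ (Fin d),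
      f x + ⟪gradient f x, y - x⟫ + m / 2 * ‖y - x‖ ^ 2 ≤ f y)
    (xstar : EuclideanSpace ℝ (Fin d))
    {Lbar : ℝ} (hLbarL : L ≤ Lbar) (hkappa : 1 < Lbar / m)
    (xt yt : EuclideanSpace ℝ (Fin d)) (hxyt : xt = yt)
    (y1 : EuclideanSpace ℝ (Fin d)) (hy1 : y1 = xt - (1 / Lbar) • gradient f xt)
    (x1 : EuclideanSpace ℝ (Fin d)) (hx1 : x1 = y1) :
    (1 + 1 / (Lbar / m - 1)) * lyapW f xstar m (Lbar / m) x1 y1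
        - lyapW f xstar m (Lbar / m) xt yt
      ≤ -(1 / (2 * Lbar)) * ‖gradient f xt‖ ^ 2 := by
  subst hx1 hy1 hxyt
  have hmLbar : m < Lbar := (one_lt_div hm).mp hkappa
  rw [lyapW_self, lyapW_self, norm_sub_smul_sub_sq]
  exact gd_lyapunov_decrease_of_bounds hm hmLbar
    (by linarith [apply_sub_smul_gradient_le (hm.trans hmLbar) hLbarL hsmooth xt])
    (sub_le_inner_gradient_sub hstrong xt xstar)

/-- One gradient-descent step decreases `W` at the GD rate:
for `x_t = y_t`, `y_{t+1} = x_t − (1/L̄)∇f(x_t)`, `x_{t+1} = y_{t+1}`,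
`(1 + δ^GD) W(x_{t+1}, y_{t+1}) − W(x_t, y_t) ≤ −(1/(2L̄))‖∇f(x_t)‖²`,
where `δ^GD = 1/(κ̄ − 1)` and `κ̄ = L̄/m`. -/
theorem stmt2
    {d : ℕ} (hd : 1 ≤ d)
    {L m : ℝ} (hm : 0 < m) (hmL : m ≤ L)
    (f : EuclideanSpace ℝ (Fin d) → ℝ)
    (hdiff : Differentiable ℝ f)
    (hsmooth : ∀ x y : EuclideanSpace ℝ (Fin d),
      f y ≤ f x + ⟪gradient f x, y - x⟫ + L / 2 * ‖y - x‖ ^ 2)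
    (hstrong : ∀ x y : EuclideanSpace ℝ (Fin d),
      f x + ⟪gradient f x, y - x⟫ + m / 2 * ‖y - x‖ ^ 2 ≤ f y)
    (xstar : EuclideanSpace ℝ (Fin d)) (hmin : ∀ z, f xstar ≤ f z)
    {Lbar : ℝ} (hLbarL : L ≤ Lbar) (hkappa : 1 < Lbar / m)
    (xt yt : EuclideanSpace ℝ (Fin d)) (hxyt : xt = yt)
    (y1 : EuclideanSpace ℝ (Fin d)) (hy1 : y1 = xt - (1 / Lbar) • gradient f xt)
    (x1 : EuclideanSpace ℝ (Fin d)) (hx1 : x1 = y1) :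
    (1 + 1 / (Lbar / m - 1)) * lyapW f xstar m (Lbar / m) x1 y1
        - lyapW f xstar m (Lbar / m) xt yt
      ≤ -(1 / (2 * Lbar)) * ‖gradient f xt‖ ^ 2 :=
  stmt2_general hm f hsmooth hstrong xstar hLbarL hkappa xt yt hxyt y1 hy1 x1 hx1
end

section
/- Let d ≥ 1, let f ∈ F(L,m) with unique minimizer x*, and let L̄ ≥ L with κ̄ = L̄/m > 1. Let x_t, y_t ∈ ℝ^d be arbitrary, and set y_{t+1} = x_t − (1/L̄)∇f(x_t) and x_{t+1} = y_{t+1} + θ (y_{t+1} − y_t), where θ = (√κ̄ − 1)/(√κ̄ + 1) (a Nesterov accelerated gradient step). Then (1 + δ^NAG) W(x_{t+1}, y_{t+1}) − W(x_t, y_t) ≤ 0, where δ^NAG = 1/(√κ̄ − 1). -/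
/-!
Write `s = √κ̄`, `g = ∇f(x_t)`. Since `(1 + s) θ = s - 1`, the point inside the norm of
`W(x_{t+1}, y_{t+1})` is `(x_t - x*) + (s - 1)(x_t - y_t) - (s/L̄) g`, an affine expression in `g`.
With `L̄ = m s²`, `(1 + δ) W(x_{t+1}, y_{t+1}) - W(x_t, y_t)` is then exactly the combination
`s/(s-1)` × (descent-lemma gap at `x_t`) + `1/(s-1)` × (strong-convexity gap from `x_t` to `x*`)
+ (strong-convexity gap from `x_t` to `y_t`) `- m(s+1)/2 ‖x_t - y_t‖²`, each term of which is `≤ 0`.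
-/

open scoped RealInnerProductSpace

section InnerProductSpace

variable {E : Type*} [NormedAddCommGroup E] [InnerProductSpace ℝ E]

theorem le_sub_of_smooth_gradient_step {f : E → ℝ} {L Lbar : ℝ} {x g : E}
    (hsmooth : ∀ y, f y ≤ f x + ⟪g, y - x⟫ + L / 2 * ‖y - x‖ ^ 2)
    (hL : L ≤ Lbar) (hLbar : 0 < Lbar) :
    f (x - (1 / Lbar) • g) ≤ f x - ‖g‖ ^ 2 / (2 * Lbar) := by
  have h := hsmooth (x - (1 / Lbar) • g)
  rw [sub_sub_cancel_left, inner_neg_right, real_inner_smul_right, real_inner_self_eq_norm_sq,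
    norm_neg, norm_smul, Real.norm_of_nonneg (by positivity)] at h
  have hLg : L / 2 * (1 / Lbar * ‖g‖) ^ 2 ≤ Lbar / 2 * (1 / Lbar * ‖g‖) ^ 2 := by gcongr
  have hLbarg : Lbar / 2 * (1 / Lbar * ‖g‖) ^ 2 = 1 / Lbar * ‖g‖ ^ 2 - ‖g‖ ^ 2 / (2 * Lbar) := by
    field_simp
    ring
  linarith

theorem nag_extrapolation_eq {x y z g x' y' : E} {s c : ℝ} (hs : s + 1 ≠ 0)
    (hy' : y' = x - c • g) (hx' : x' = y' + ((s - 1) / (s + 1)) • (y' - y)) :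
    x' + s • (x' - y') - z = (x - z) + (s - 1) • (x - y) - (s * c) • g := by
  have hθ : (1 + s) * ((s - 1) / (s + 1)) = s - 1 := by
    field_simp
    ring
  calc x' + s • (x' - y') - z = y' + ((1 + s) * ((s - 1) / (s + 1))) • (y' - y) - z := by
        rw [hx']; module
    _ = (x - z) + (s - 1) • (x - y) - (s * c) • g := by
        rw [hθ, hy']; module

theorem nag_lyapunov_step_eq {m s : ℝ} (hm : m ≠ 0) (hs : s ≠ 0) (hs1 : s - 1 ≠ 0)
    (x y z g : E) (F₁ Fx Fy Fz : ℝ) :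
    (1 + 1 / (s - 1)) * (F₁ - Fz + m / 2 * ‖(x - z) + (s - 1) • (x - y) - (m * s)⁻¹ • g‖ ^ 2)
        - (Fy - Fz + m / 2 * ‖x + s • (x - y) - z‖ ^ 2)
      = s / (s - 1) * (F₁ - (Fx - ‖g‖ ^ 2 / (2 * (m * s ^ 2))))
        + 1 / (s - 1) * (Fx + ⟪g, z - x⟫ + m / 2 * ‖z - x‖ ^ 2 - Fz)
        + (Fx + ⟪g, y - x⟫ + m / 2 * ‖y - x‖ ^ 2 - Fy)
        - m * (s + 1) / 2 * ‖x - y‖ ^ 2 := by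
  have hz : z - x = -(x - z) := (neg_sub x z).symm
  have hy : y - x = -(x - y) := (neg_sub x y).symm
  have hxz : x + s • (x - y) - z = (x - z) + s • (x - y) := by abel
  rw [hz, hy, hxz]
  generalize x - z = a
  generalize x - y = b
  simp only [← real_inner_self_eq_norm_sq, inner_add_left, inner_add_right, inner_sub_left,
    inner_sub_right, inner_neg_left, inner_neg_right, real_inner_smul_left,
    real_inner_smul_right, real_inner_comm a g, real_inner_comm b g, real_inner_comm b a]
  field_simp
  ring

theorem nag_lyapunov_step_nonpos {m s : ℝ} (hm : 0 < m) (hs : 1 < s)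
    {x y z g : E} {F₁ Fx Fy Fz : ℝ} (hdescent : F₁ ≤ Fx - ‖g‖ ^ 2 / (2 * (m * s ^ 2)))
    (hstrong_z : Fx + ⟪g, z - x⟫ + m / 2 * ‖z - x‖ ^ 2 ≤ Fz)
    (hstrong_y : Fx + ⟪g, y - x⟫ + m / 2 * ‖y - x‖ ^ 2 ≤ Fy) :
    (1 + 1 / (s - 1)) * (F₁ - Fz + m / 2 * ‖(x - z) + (s - 1) • (x - y) - (m * s)⁻¹ • g‖ ^ 2)
        - (Fy - Fz + m / 2 * ‖x + s • (x - y) - z‖ ^ 2) ≤ 0 := by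
  rw [nag_lyapunov_step_eq (Fx := Fx) hm.ne' (by positivity) (by linarith)]
  have hs1 : 0 < s - 1 := by linarith
  have h₁ : s / (s - 1) * (F₁ - (Fx - ‖g‖ ^ 2 / (2 * (m * s ^ 2)))) ≤ 0 :=
    mul_nonpos_of_nonneg_of_nonpos (by positivity) (by linarith)
  have h₂ : 1 / (s - 1) * (Fx + ⟪g, z - x⟫ + m / 2 * ‖z - x‖ ^ 2 - Fz) ≤ 0 :=
    mul_nonpos_of_nonneg_of_nonpos (by positivity) (by linarith)
  have h₃ : 0 ≤ m * (s + 1) / 2 * ‖x - y‖ ^ 2 := by positivity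
  linarith

end InnerProductSpace

theorem stmt3_general
    {d : ℕ}
    {L m : ℝ} (hm : 0 < m)
    (f : EuclideanSpace ℝ (Fin d) → ℝ)
    (hsmooth : ∀ x y : EuclideanSpace ℝ (Fin d),
      f y ≤ f x + ⟪gradient f x, y - x⟫ + L / 2 * ‖y - x‖ ^ 2)
    (hstrong : ∀ x y : EuclideanSpace ℝ (Fin d),
      f x + ⟪gradient f x, y - x⟫ + m / 2 * ‖y - x‖ ^ 2 ≤ f y)
    (xstar : EuclideanSpace ℝ (Fin d))
    {Lbar : ℝ} (hLbarL : L ≤ Lbar) (hkappa : 1 < Lbar / m)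
    (xt yt : EuclideanSpace ℝ (Fin d))
    (y1 : EuclideanSpace ℝ (Fin d)) (hy1 : y1 = xt - (1 / Lbar) • gradient f xt)
    (x1 : EuclideanSpace ℝ (Fin d))
    (hx1 : x1 = y1 + ((Real.sqrt (Lbar / m) - 1) / (Real.sqrt (Lbar / m) + 1)) • (y1 - yt)) :
    (1 + 1 / (Real.sqrt (Lbar / m) - 1)) * lyapW f xstar m (Lbar / m) x1 y1
        - lyapW f xstar m (Lbar / m) xt yt ≤ 0 := by
  set s := Real.sqrt (Lbar / m)
  have hs : 1 < s := Real.lt_sqrt_of_sq_lt (by simpa using hkappa)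
  have hLbar : Lbar = m * s ^ 2 := by
    rw [Real.sq_sqrt (by linarith)]
    field_simp
  have hstep : s * (1 / Lbar) = (m * s)⁻¹ := by
    rw [hLbar]
    field_simp
  have hdescent : f y1 ≤ f xt - ‖gradient f xt‖ ^ 2 / (2 * Lbar) :=
    hy1 ▸ le_sub_of_smooth_gradient_step (hsmooth xt) hLbarL (by rw [hLbar]; positivity)
  rw [lyapW, lyapW, nag_extrapolation_eq (by positivity) hy1 hx1, hstep]
  exact nag_lyapunov_step_nonpos hm hs (hLbar ▸ hdescent) (hstrong xt xstar) (hstrong xt yt)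

/-- One Nesterov accelerated gradient step decreases `W` at
the accelerated rate: for arbitrary `x_t, y_t`, with
`y_{t+1} = x_t − (1/L̄)∇f(x_t)`, `x_{t+1} = y_{t+1} + θ(y_{t+1} − y_t)`,
`θ = (√κ̄ − 1)/(√κ̄ + 1)`, we have
`(1 + δ^NAG) W(x_{t+1}, y_{t+1}) − W(x_t, y_t) ≤ 0` with `δ^NAG = 1/(√κ̄ − 1)`. -/
theorem stmt3
    {d : ℕ} (hd : 1 ≤ d)
    {L m : ℝ} (hm : 0 < m) (hmL : m ≤ L)
    (f : EuclideanSpace ℝ (Fin d) → ℝ)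
    (hdiff : Differentiable ℝ f)
    (hsmooth : ∀ x y : EuclideanSpace ℝ (Fin d),
      f y ≤ f x + ⟪gradient f x, y - x⟫ + L / 2 * ‖y - x‖ ^ 2)
    (hstrong : ∀ x y : EuclideanSpace ℝ (Fin d),
      f x + ⟪gradient f x, y - x⟫ + m / 2 * ‖y - x‖ ^ 2 ≤ f y)
    (xstar : EuclideanSpace ℝ (Fin d)) (hmin : ∀ z, f xstar ≤ f z)
    {Lbar : ℝ} (hLbarL : L ≤ Lbar) (hkappa : 1 < Lbar / m)
    (xt yt : EuclideanSpace ℝ (Fin d))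
    (y1 : EuclideanSpace ℝ (Fin d)) (hy1 : y1 = xt - (1 / Lbar) • gradient f xt)
    (x1 : EuclideanSpace ℝ (Fin d))
    (hx1 : x1 = y1 + ((Real.sqrt (Lbar / m) - 1) / (Real.sqrt (Lbar / m) + 1)) • (y1 - yt)) :
    (1 + 1 / (Real.sqrt (Lbar / m) - 1)) * lyapW f xstar m (Lbar / m) x1 y1
        - lyapW f xstar m (Lbar / m) xt yt ≤ 0 :=
  stmt3_general hm f hsmooth hstrong xstar hLbarL hkappa xt yt y1 hy1 x1 hx1
end

section
/- Let d ≥ 1, let f ∈ F(L,m) with unique minimizer x*, and let L̄ ≥ L with κ̄ = L̄/m > 1. Suppose the sequences (x_t), (y_t), (m_t) are generated by NAG-free with parameter L̄ from x_0 = y_0 and m_0 ∈ [m, L] (so that m_t ∈ [m, L] is nonincreasing). Then for every t ≥ 0, V^GD_{t+1}(x_{t+1}, y_{t+1}) ≤ 2 L̄ ((κ̄ − 1)/κ̄)^t ‖x_0 − x*‖², where V^GD_{t+1} = W + (ᾱ_t/√κ̄) U. -/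
/-!
With `s = √κ̄` and `t = β(s + 1) ∈ [0, s - 1]`, a NAG-free step with momentum `β ∈ [0, θ]`
contracts `W + w U`, for the fixed weight `w = (1 - β/θ)/s = (s - 1 - t)/(s(s - 1))`, by the
factor `1 - 1/κ̄`. This is a fixed nonnegative combination (with polynomial multipliers in `s`
and `t`) of the descent lemma at `x`, strong convexity along `x → x*`, `x → y` and `x* → y`,
and three squares. Strong convexity makes every secant curvature `c_{t+1}` at least `m`, so
`m ≤ m_t ≤ m_0 ≤ L̄`; as `m_t` decreases, `β_t` increases and the weight `ᾱ_t/√κ̄` decreases,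
so replacing `ᾱ_{t+1}` by `ᾱ_t` only increases `V`, and the contractions chain down to
`V(x₀, y₀) ≤ 2 L̄ ‖x₀ − x*‖²`.
-/

open scoped RealInnerProductSpace Classical

/-- The auxiliary function `U(x, y) = f(y) − f(x*) + (L̄/2)‖y − x*‖²`. -/
noncomputable def lyapU {d : ℕ} (f : EuclideanSpace ℝ (Fin d) → ℝ)
    (xstar : EuclideanSpace ℝ (Fin d)) (Lbar : ℝ)
    (_x y : EuclideanSpace ℝ (Fin d)) : ℝ :=
  f y - f xstar + Lbar / 2 * ‖y - xstar‖ ^ 2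

open scoped NNReal

section InnerProductSpace

variable {E : Type*} [NormedAddCommGroup E] [InnerProductSpace ℝ E]

theorem norm_smul_sub_smul_sq (a b : ℝ) (w z : E) :
    ‖a • w - b • z‖ ^ 2 = a ^ 2 * ‖w‖ ^ 2 - 2 * (a * b) * ⟪w, z⟫ + b ^ 2 * ‖z‖ ^ 2 := by
  rw [norm_sub_sq_real, norm_smul, norm_smul, real_inner_smul_left, real_inner_smul_right,
    mul_pow, mul_pow, Real.norm_eq_abs, Real.norm_eq_abs, sq_abs, sq_abs]
  ring

theorem lyapunov_remainder_nonneg {s t : ℝ} (ht : 0 ≤ t) (hts : t ≤ s - 1) :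
    0 ≤ 1 + t - s - 3*s*t - 2*s*t^2 - 3*s^2 + 2*s^2*t^2 + 3*s^3 + 6*s^3*t + 2*s^3*t^2
      + 3*s^4 - 3*s^4*t - 2*s^4*t^2 - 3*s^5 - 3*s^5*t - s^6 + 2*s^6*t + s^7 := by
  lift t to ℝ≥0 using ht
  obtain ⟨g, hg, rfl⟩ : ∃ g, 0 ≤ g ∧ s = 1 + t + g := ⟨s - 1 - t, by linarith, by ring⟩
  lift g to ℝ≥0 using hg
  ring_nf
  positivity

/- Multiplied by `A`, the right side minus the left side is the sum of the four hypotheses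
with multipliers `A (s² - 1 - t) · (s², s, s (s - 1), s - 1)` and of `m/2` times
`s ‖A u - c v‖² + A (s² - (1 + t)²) s³ (s - 1) ‖r - v‖² + H(s, t) ‖v‖²`, where `H` is the
polynomial of `lyapunov_remainder_nonneg`. -/
theorem lyapunov_decrease_certificate {s t m Fx Fy Fyp : ℝ} (hs : 1 < s) (ht : 0 ≤ t)
    (hts : t ≤ s - 1) (hm : 0 < m) (u v r : E)
    (hdescent : Fyp ≤ Fx - m * s ^ 2 / 2 * ‖u - r‖ ^ 2)
    (hstar : Fx - m * s ^ 2 * ⟪u - r, u⟫ + m / 2 * ‖u‖ ^ 2 ≤ 0)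
    (hxy : Fx + m * s ^ 2 * ⟪u - r, v - u⟫ + m / 2 * ‖v - u‖ ^ 2 ≤ Fy)
    (hy : m / 2 * ‖v‖ ^ 2 ≤ Fy) :
    s ^ 2 * (s * (s - 1) * (Fyp + m / 2 * ‖(1 + t) • r - t • v‖ ^ 2)
        + (s - 1 - t) * (Fyp + m * s ^ 2 / 2 * ‖r‖ ^ 2))
      ≤ (s ^ 2 - 1) * (s * (s - 1) * (Fy + m / 2 * ‖(1 + s) • u - s • v‖ ^ 2)
        + (s - 1 - t) * (Fy + m * s ^ 2 / 2 * ‖v‖ ^ 2)) := by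
  set A := (s ^ 2 - 1) * (s ^ 2 - 1 + t * s)
  set c := (s - 1) * (s ^ 2 - 1) * (s + 1 + t)
  have hA : 0 < A := by
    have : 0 < s ^ 2 - 1 := by nlinarith
    positivity
  have hk : 0 ≤ A * (s ^ 2 - 1 - t) := mul_nonneg hA.le (by nlinarith)
  have hsq₁ : 0 ≤ ‖A • u - c • v‖ ^ 2 := sq_nonneg _
  have hsq₂ : 0 ≤ ‖r - v‖ ^ 2 := sq_nonneg _
  have hH := lyapunov_remainder_nonneg ht hts
  rw [norm_smul_sub_smul_sq] at hsq₁
  rw [norm_smul_sub_smul_sq, norm_smul_sub_smul_sq]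
  rw [norm_sub_sq_real] at hdescent hsq₂ hxy
  rw [inner_sub_left, real_inner_self_eq_norm_sq, real_inner_comm] at hstar
  rw [inner_sub_left, inner_sub_right, inner_sub_right, real_inner_self_eq_norm_sq] at hxy
  rw [real_inner_comm u r, real_inner_comm u v] at hxy
  have hs₀ : 0 ≤ s := by linarith
  have hs₁ : 0 ≤ s - 1 := by linarith
  have hF : 0 ≤ (s ^ 2 - (1 + t) ^ 2) * s ^ 3 * (s - 1) := by
    have : 0 ≤ s ^ 2 - (1 + t) ^ 2 := by nlinarith
    positivity
  have e₁ := mul_le_mul_of_nonneg_left hdescent (mul_nonneg hk (sq_nonneg s))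
  have e₂ := mul_le_mul_of_nonneg_left hstar (mul_nonneg hk hs₀)
  have e₃ := mul_le_mul_of_nonneg_left hxy (mul_nonneg hk (mul_nonneg hs₀ hs₁))
  have e₄ := mul_le_mul_of_nonneg_left hy (mul_nonneg hk hs₁)
  have q₁ := mul_nonneg (mul_nonneg hm.le hs₀) hsq₁
  have q₂ := mul_nonneg (mul_nonneg (mul_nonneg hm.le hA.le) hF) hsq₂
  have q₃ := mul_nonneg (mul_nonneg hm.le hH) (sq_nonneg ‖v‖)
  refine le_of_mul_le_mul_left ?_ hA
  linear_combination e₁ + e₂ + e₃ + e₄ + q₁ / 2 + q₂ / 2 + q₃ / 2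

variable [CompleteSpace E]

theorem le_norm_gradient_sub_div_norm_sub {f : E → ℝ} {m : ℝ}
    (hstrong : ∀ x y : E, f x + ⟪gradient f x, y - x⟫ + m / 2 * ‖y - x‖ ^ 2 ≤ f y)
    {x y : E} (hxy : y ≠ x) :
    m ≤ ‖gradient f y - gradient f x‖ / ‖y - x‖ := by
  have hpos : 0 < ‖y - x‖ := norm_pos_iff.mpr (sub_ne_zero.mpr hxy)
  have hmono : m * ‖y - x‖ ^ 2 ≤ ⟪gradient f y - gradient f x, y - x⟫ := by
    have h₁ := hstrong x y
    have h₂ := hstrong y x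
    rw [← neg_sub y x, inner_neg_right, norm_neg] at h₂
    rw [inner_sub_left]
    linarith
  rw [le_div_iff₀ hpos]
  nlinarith [real_inner_le_norm (gradient f y - gradient f x) (y - x)]

section NAGFree

variable [DecidableEq E] {f : E → ℝ} {x : ℕ → E} {mseq : ℕ → ℝ}

theorem nagFree_curvature_antitone
    (hrec : ∀ t, mseq (t + 1) = if x (t + 1) = x t then mseq t
      else min (mseq t) (‖gradient f (x (t + 1)) - gradient f (x t)‖ / ‖x (t + 1) - x t‖)) :
    Antitone mseq := by
  refine antitone_nat_of_succ_le fun t => ?_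
  rw [hrec t]
  split_ifs
  · exact le_rfl
  · exact min_le_left _ _

theorem nagFree_le_curvature {m : ℝ}
    (hstrong : ∀ x y : E, f x + ⟪gradient f x, y - x⟫ + m / 2 * ‖y - x‖ ^ 2 ≤ f y)
    (h₀ : m ≤ mseq 0)
    (hrec : ∀ t, mseq (t + 1) = if x (t + 1) = x t then mseq t
      else min (mseq t) (‖gradient f (x (t + 1)) - gradient f (x t)‖ / ‖x (t + 1) - x t‖))
    (t : ℕ) : m ≤ mseq t := by
  induction t with
  | zero => exact h₀
  | succ t ih =>
    rw [hrec t]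
    split_ifs with hx
    · exact ih
    · exact le_min ih (le_norm_gradient_sub_div_norm_sub hstrong hx)

end NAGFree

end InnerProductSpace

/- `nagMomentum L̄ m_t` is the momentum `β_t`, `nagMomentum L̄ m` is `θ`, and
`nagWeight L̄ m m_t = ᾱ_t / √κ̄` is the weight of `U` in `V^GD_{t+1}`. -/
noncomputable def nagMomentum (Lbar μ : ℝ) : ℝ := (√(Lbar / μ) - 1) / (√(Lbar / μ) + 1)

noncomputable def nagWeight (Lbar m μ : ℝ) : ℝ :=
  (1 - nagMomentum Lbar μ / nagMomentum Lbar m) / √(Lbar / m)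

theorem nagMomentum_nonneg {Lbar μ : ℝ} (hμ : 0 < μ) (hμL : μ ≤ Lbar) :
    0 ≤ nagMomentum Lbar μ := by
  have : 1 ≤ √(Lbar / μ) := Real.one_le_sqrt.mpr ((one_le_div hμ).mpr hμL)
  unfold nagMomentum
  apply div_nonneg <;> linarith

theorem nagMomentum_pos {Lbar m : ℝ} (hκ : 1 < Lbar / m) : 0 < nagMomentum Lbar m := by
  have : 1 < √(Lbar / m) := Real.lt_sqrt_of_sq_lt (by simpa using hκ)
  unfold nagMomentum
  apply div_pos <;> linarith

theorem nagMomentum_le_of_le {Lbar μ ν : ℝ} (hL : 0 ≤ Lbar) (hμ : 0 < μ) (hμν : μ ≤ ν) :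
    nagMomentum Lbar ν ≤ nagMomentum Lbar μ := by
  have hsqrt : √(Lbar / ν) ≤ √(Lbar / μ) :=
    Real.sqrt_le_sqrt (div_le_div_of_nonneg_left hL hμ hμν)
  have h₀ := Real.sqrt_nonneg (Lbar / ν)
  unfold nagMomentum
  rw [div_le_div_iff₀ (by positivity) (by positivity)]
  nlinarith

theorem nagWeight_le_one {Lbar m μ : ℝ} (hm : 0 < m) (hκ : 1 < Lbar / m) (hmμ : m ≤ μ)
    (hμL : μ ≤ Lbar) : nagWeight Lbar m μ ≤ 1 := by
  have hβ := div_nonneg (nagMomentum_nonneg (hm.trans_le hmμ) hμL) (nagMomentum_pos hκ).le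
  have : 1 < √(Lbar / m) := Real.lt_sqrt_of_sq_lt (by simpa using hκ)
  rw [nagWeight, div_le_one (by linarith)]
  linarith

theorem nagWeight_le_of_le {Lbar m μ ν : ℝ} (hm : 0 < m) (hκ : 1 < Lbar / m) (hμ : 0 < μ)
    (hμν : μ ≤ ν) : nagWeight Lbar m μ ≤ nagWeight Lbar m ν := by
  have hL : 0 ≤ Lbar := by
    have := (one_lt_div hm).mp hκ
    linarith
  unfold nagWeight
  gcongr
  · exact (nagMomentum_pos hκ).le
  · exact nagMomentum_le_of_le hL hμ hμν

theorem le_geom_of_lyapunov_step {W U w : ℕ → ℝ} {ρ C : ℝ} (hρ₀ : 0 ≤ ρ) (hρ₁ : ρ ≤ 1)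
    (hC : 0 ≤ C) (hU : ∀ n, 0 ≤ U n) (hw : Antitone w) (h₀ : W 0 + w 0 * U 0 ≤ C)
    (hstep : ∀ n, W (n + 1) + w n * U (n + 1) ≤ ρ * (W n + w n * U n)) (n : ℕ) :
    W (n + 1) + w n * U (n + 1) ≤ C * ρ ^ n := by
  induction n with
  | zero => nlinarith [hstep 0]
  | succ n ih =>
    have hweight : w (n + 1) * U (n + 1) ≤ w n * U (n + 1) :=
      mul_le_mul_of_nonneg_right (hw n.le_succ) (hU _)
    calc W (n + 2) + w (n + 1) * U (n + 2)
        ≤ ρ * (W (n + 1) + w (n + 1) * U (n + 1)) := hstep (n + 1)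
      _ ≤ ρ * (C * ρ ^ n) := by gcongr; linarith
      _ = C * ρ ^ (n + 1) := by ring

section Lyapunov

variable {d : ℕ} {f : EuclideanSpace ℝ (Fin d) → ℝ} {xstar : EuclideanSpace ℝ (Fin d)}

theorem lyapU_nonneg {Lbar : ℝ} (hmin : ∀ z, f xstar ≤ f z) (hL : 0 ≤ Lbar)
    (x y : EuclideanSpace ℝ (Fin d)) : 0 ≤ lyapU f xstar Lbar x y := by
  unfold lyapU
  have := hmin y
  positivity

theorem lyap_initial_le {m Lbar w : ℝ} (hmL : m ≤ Lbar) (hw : w ≤ 1)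
    (hmin : ∀ z, f xstar ≤ f z)
    (hsmooth : ∀ x y, f y ≤ f x + ⟪gradient f x, y - x⟫ + Lbar / 2 * ‖y - x‖ ^ 2)
    (hgrad : gradient f xstar = 0) (x₀ : EuclideanSpace ℝ (Fin d)) :
    lyapW f xstar m (Lbar / m) x₀ x₀ + w * lyapU f xstar Lbar x₀ x₀
      ≤ 2 * Lbar * ‖x₀ - xstar‖ ^ 2 := by
  have hgap : f x₀ - f xstar ≤ Lbar / 2 * ‖x₀ - xstar‖ ^ 2 := by
    have := hsmooth xstar x₀
    rw [hgrad, inner_zero_left] at this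
    linarith
  have hU : 0 ≤ lyapU f xstar Lbar x₀ x₀ := by
    unfold lyapU
    linarith [hmin x₀]
  have hw' := mul_le_mul_of_nonneg_right hw hU
  have hm' := mul_le_mul_of_nonneg_right hmL (sq_nonneg ‖x₀ - xstar‖)
  unfold lyapW lyapU at hU hw' ⊢
  rw [sub_self, smul_zero, add_zero]
  linarith

theorem lyap_step_scaled {m s t : ℝ} (hm : 0 < m) (hs : 1 < s) (ht : 0 ≤ t) (hts : t ≤ s - 1)
    (hsmooth : ∀ x y, f y ≤ f x + ⟪gradient f x, y - x⟫ + m * s ^ 2 / 2 * ‖y - x‖ ^ 2)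
    (hstrong : ∀ x y, f x + ⟪gradient f x, y - x⟫ + m / 2 * ‖y - x‖ ^ 2 ≤ f y)
    (hgrad : gradient f xstar = 0) {x y yp xp : EuclideanSpace ℝ (Fin d)}
    (hyp : yp = x - (1 / (m * s ^ 2)) • gradient f x) (hxp : xp = yp + (t / (s + 1)) • (yp - y)) :
    s ^ 2 * (s * (s - 1) * lyapW f xstar m (s ^ 2) xp yp
        + (s - 1 - t) * lyapU f xstar (m * s ^ 2) xp yp)
      ≤ (s ^ 2 - 1) * (s * (s - 1) * lyapW f xstar m (s ^ 2) x y
        + (s - 1 - t) * lyapU f xstar (m * s ^ 2) x y) := by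
  have hs₀ : 0 ≤ s := by linarith
  have hL : m * s ^ 2 ≠ 0 := by positivity
  have hg : gradient f x = (m * s ^ 2) • ((x - xstar) - (yp - xstar)) := by
    rw [hyp, sub_sub_sub_cancel_right, sub_sub_cancel, smul_smul, mul_one_div_cancel hL, one_smul]
  have hz : xp + s • (xp - yp) - xstar = (1 + t) • (yp - xstar) - t • (y - xstar) := by
    have : (1 + s) * (t / (s + 1)) = t := by field_simp; ring
    rw [hxp, add_sub_cancel_left]
    linear_combination (norm := module) this • (yp - y)
  have hz' : x + s • (x - y) - xstar = (1 + s) • (x - xstar) - s • (y - xstar) := by module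
  have hr : yp - x = -((x - xstar) - (yp - xstar)) := by abel
  have hu : xstar - x = -(x - xstar) := by abel
  have hvu : y - x = (y - xstar) - (x - xstar) := by abel
  unfold lyapW lyapU
  rw [Real.sqrt_sq hs₀, hz, hz']
  apply lyapunov_decrease_certificate (Fx := f x - f xstar) hs ht hts hm
  · have := hsmooth x yp
    rw [hg, hr, inner_neg_right, real_inner_smul_left, real_inner_self_eq_norm_sq, norm_neg] at this
    linarith
  · have := hstrong x xstar
    rw [hg, hu, inner_neg_right, real_inner_smul_left, norm_neg] at this
    linarith
  · have := hstrong x y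
    rw [hg, hvu, real_inner_smul_left] at this
    linarith
  · have := hstrong xstar y
    rw [hgrad, inner_zero_left] at this
    linarith

theorem lyap_step {m Lbar μ : ℝ} (hm : 0 < m) (hκ : 1 < Lbar / m) (hmμ : m ≤ μ) (hμL : μ ≤ Lbar)
    (hsmooth : ∀ x y, f y ≤ f x + ⟪gradient f x, y - x⟫ + Lbar / 2 * ‖y - x‖ ^ 2)
    (hstrong : ∀ x y, f x + ⟪gradient f x, y - x⟫ + m / 2 * ‖y - x‖ ^ 2 ≤ f y)
    (hgrad : gradient f xstar = 0) {x y yp xp : EuclideanSpace ℝ (Fin d)}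
    (hyp : yp = x - (1 / Lbar) • gradient f x) (hxp : xp = yp + nagMomentum Lbar μ • (yp - y)) :
    lyapW f xstar m (Lbar / m) xp yp + nagWeight Lbar m μ * lyapU f xstar Lbar xp yp
      ≤ (Lbar / m - 1) / (Lbar / m) *
        (lyapW f xstar m (Lbar / m) x y + nagWeight Lbar m μ * lyapU f xstar Lbar x y) := by
  obtain ⟨s, hs, rfl⟩ : ∃ s, 1 < s ∧ Lbar = m * s ^ 2 :=
    ⟨√(Lbar / m), Real.lt_sqrt_of_sq_lt (by simpa using hκ), by
      rw [Real.sq_sqrt (by linarith), mul_div_cancel₀ _ hm.ne']⟩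
  have hκ' : m * s ^ 2 / m = s ^ 2 := by field_simp
  have hsqrt : √(m * s ^ 2 / m) = s := by rw [hκ', Real.sqrt_sq (by linarith)]
  have hθ : nagMomentum (m * s ^ 2) m = (s - 1) / (s + 1) := by rw [nagMomentum, hsqrt]
  set t := nagMomentum (m * s ^ 2) μ * (s + 1) with ht_def
  have hs₁ : 0 < s + 1 := by linarith
  have hβ : nagMomentum (m * s ^ 2) μ = t / (s + 1) := by rw [ht_def]; field_simp
  have ht : 0 ≤ t := mul_nonneg (nagMomentum_nonneg (hm.trans_le hmμ) hμL) hs₁.le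
  have hts : t ≤ s - 1 := by
    have := nagMomentum_le_of_le (Lbar := m * s ^ 2) (by positivity) hm hmμ
    rwa [hθ, hβ, div_le_div_iff_of_pos_right hs₁] at this
  have hs₂ : 0 < s - 1 := by linarith
  have hw : nagWeight (m * s ^ 2) m μ = (s - 1 - t) / (s * (s - 1)) := by
    rw [nagWeight, hθ, hsqrt, hβ]
    field_simp
  have key := lyap_step_scaled hm hs ht hts hsmooth hstrong hgrad hyp (hβ ▸ hxp)
  have hpos : 0 < s ^ 3 * (s - 1) := by positivity
  rw [hκ', hw]
  have hscale : ∀ A B : ℝ, s ^ 3 * (s - 1) * (A + (s - 1 - t) / (s * (s - 1)) * B)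
      = s ^ 2 * (s * (s - 1) * A + (s - 1 - t) * B) := by
    intro A B
    field_simp
  have hscale' : ∀ A B : ℝ,
      s ^ 3 * (s - 1) * ((s ^ 2 - 1) / s ^ 2 * (A + (s - 1 - t) / (s * (s - 1)) * B))
        = (s ^ 2 - 1) * (s * (s - 1) * A + (s - 1 - t) * B) := by
    intro A B
    field_simp
  rw [← mul_le_mul_iff_of_pos_left hpos, hscale, hscale']
  exact key

end Lyapunov

theorem stmt5_general
    {d : ℕ}
    {L m : ℝ} (hm : 0 < m)
    (f : EuclideanSpace ℝ (Fin d) → ℝ)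
    (hsmooth : ∀ x y : EuclideanSpace ℝ (Fin d),
      f y ≤ f x + ⟪gradient f x, y - x⟫ + L / 2 * ‖y - x‖ ^ 2)
    (hstrong : ∀ x y : EuclideanSpace ℝ (Fin d),
      f x + ⟪gradient f x, y - x⟫ + m / 2 * ‖y - x‖ ^ 2 ≤ f y)
    (xstar : EuclideanSpace ℝ (Fin d)) (hmin : ∀ z, f xstar ≤ f z)
    {Lbar : ℝ} (hLbarL : L ≤ Lbar) (hkappa : 1 < Lbar / m)
    (x y : ℕ → EuclideanSpace ℝ (Fin d)) (mseq : ℕ → ℝ)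
    (hxy0 : x 0 = y 0) (hmseq0 : mseq 0 ∈ Set.Icc m L)
    (hy : ∀ t, y (t + 1) = x t - (1 / Lbar) • gradient f (x t))
    (hx : ∀ t, x (t + 1) = y (t + 1) +
      ((Real.sqrt (Lbar / mseq t) - 1) / (Real.sqrt (Lbar / mseq t) + 1)) • (y (t + 1) - y t))
    (hmrec : ∀ t, mseq (t + 1) =
      if x (t + 1) = x t then mseq t
      else min (mseq t) (‖gradient f (x (t + 1)) - gradient f (x t)‖ / ‖x (t + 1) - x t‖)) :
    ∀ t : ℕ,
      lyapW f xstar m (Lbar / m) (x (t + 1)) (y (t + 1)) +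
        ((1 - ((Real.sqrt (Lbar / mseq t) - 1) / (Real.sqrt (Lbar / mseq t) + 1)) /
              ((Real.sqrt (Lbar / m) - 1) / (Real.sqrt (Lbar / m) + 1))) / Real.sqrt (Lbar / m)) *
          lyapU f xstar Lbar (x (t + 1)) (y (t + 1))
      ≤ 2 * Lbar * ((Lbar / m - 1) / (Lbar / m)) ^ t * ‖x 0 - xstar‖ ^ 2 := by
  have hmL : m < Lbar := (one_lt_div hm).mp hkappa
  have hsmooth' : ∀ a b, f b ≤ f a + ⟪gradient f a, b - a⟫ + Lbar / 2 * ‖b - a‖ ^ 2 :=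
    fun a b => (hsmooth a b).trans (by gcongr)
  have hgrad : gradient f xstar = 0 := by
    rw [gradient, IsLocalMin.fderiv_eq_zero (Filter.Eventually.of_forall hmin), map_zero]
  have hmμ : ∀ t, m ≤ mseq t := nagFree_le_curvature hstrong hmseq0.1 hmrec
  have hanti : Antitone mseq := nagFree_curvature_antitone hmrec
  have hμL : ∀ t, mseq t ≤ Lbar := fun t => (hanti t.zero_le).trans (hmseq0.2.trans hLbarL)
  have hρ₀ : 0 ≤ (Lbar / m - 1) / (Lbar / m) := div_nonneg (by linarith) (by linarith)
  have hρ₁ : (Lbar / m - 1) / (Lbar / m) ≤ 1 := (div_le_one (by linarith)).mpr (by linarith)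
  have hinit : lyapW f xstar m (Lbar / m) (x 0) (y 0)
      + nagWeight Lbar m (mseq 0) * lyapU f xstar Lbar (x 0) (y 0)
        ≤ 2 * Lbar * ‖x 0 - xstar‖ ^ 2 := by
    rw [← hxy0]
    exact lyap_initial_le hmL.le (nagWeight_le_one hm hkappa (hmμ 0) (hμL 0)) hmin hsmooth' hgrad _
  intro t
  calc _ ≤ 2 * Lbar * ‖x 0 - xstar‖ ^ 2 * ((Lbar / m - 1) / (Lbar / m)) ^ t :=
        le_geom_of_lyapunov_step (W := fun n => lyapW f xstar m (Lbar / m) (x n) (y n))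
          (U := fun n => lyapU f xstar Lbar (x n) (y n)) (w := fun n => nagWeight Lbar m (mseq n))
          hρ₀ hρ₁ (mul_nonneg (by linarith) (sq_nonneg _))
          (fun n => lyapU_nonneg hmin (by linarith) _ _)
          (fun a b hab => nagWeight_le_of_le hm hkappa (hm.trans_le (hmμ b)) (hanti hab)) hinit
          (fun n => lyap_step hm hkappa (hmμ n) (hμL n) hsmooth' hstrong hgrad (hy n) (hx n)) t
    _ = _ := by ring

/-- Along NAG-free iterates the Lyapunov function
`V^GD_{t+1} = W + (ᾱ_t/√κ̄) U`, with `ᾱ_t = 1 − β_t/θ`, decays at the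
gradient-descent rate:
`V^GD_{t+1}(x_{t+1}, y_{t+1}) ≤ 2 L̄ ((κ̄ − 1)/κ̄)^t ‖x₀ − x*‖²`. -/
theorem stmt5
    {d : ℕ} (hd : 1 ≤ d)
    {L m : ℝ} (hm : 0 < m) (hmL : m ≤ L)
    (f : EuclideanSpace ℝ (Fin d) → ℝ)
    (hdiff : Differentiable ℝ f)
    (hsmooth : ∀ x y : EuclideanSpace ℝ (Fin d),
      f y ≤ f x + ⟪gradient f x, y - x⟫ + L / 2 * ‖y - x‖ ^ 2)
    (hstrong : ∀ x y : EuclideanSpace ℝ (Fin d),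
      f x + ⟪gradient f x, y - x⟫ + m / 2 * ‖y - x‖ ^ 2 ≤ f y)
    (xstar : EuclideanSpace ℝ (Fin d)) (hmin : ∀ z, f xstar ≤ f z)
    {Lbar : ℝ} (hLbarL : L ≤ Lbar) (hkappa : 1 < Lbar / m)
    (x y : ℕ → EuclideanSpace ℝ (Fin d)) (mseq : ℕ → ℝ)
    (hxy0 : x 0 = y 0) (hmseq0 : mseq 0 ∈ Set.Icc m L)
    (hy : ∀ t, y (t + 1) = x t - (1 / Lbar) • gradient f (x t))
    (hx : ∀ t, x (t + 1) = y (t + 1) +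
      ((Real.sqrt (Lbar / mseq t) - 1) / (Real.sqrt (Lbar / mseq t) + 1)) • (y (t + 1) - y t))
    (hmrec : ∀ t, mseq (t + 1) =
      if x (t + 1) = x t then mseq t
      else min (mseq t) (‖gradient f (x (t + 1)) - gradient f (x t)‖ / ‖x (t + 1) - x t‖)) :
    ∀ t : ℕ,
      lyapW f xstar m (Lbar / m) (x (t + 1)) (y (t + 1)) +
        ((1 - ((Real.sqrt (Lbar / mseq t) - 1) / (Real.sqrt (Lbar / mseq t) + 1)) /
              ((Real.sqrt (Lbar / m) - 1) / (Real.sqrt (Lbar / m) + 1))) / Real.sqrt (Lbar / m)) *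
          lyapU f xstar Lbar (x (t + 1)) (y (t + 1))
      ≤ 2 * Lbar * ((Lbar / m - 1) / (Lbar / m)) ^ t * ‖x 0 - xstar‖ ^ 2 :=
  stmt5_general hm f hsmooth hstrong xstar hmin hLbarL hkappa x y mseq hxy0 hmseq0 hy hx hmrec
end

section
/- Let d ≥ 1, let f ∈ F(L,m) with unique minimizer x*, and let L̄ ≥ L. Let x_t, y_t ∈ ℝ^d and let m_t be a positive real with m_t ≤ m and m_t < L̄; set κ̄_t = L̄/m_t, β_t = (√κ̄_t − 1)/(√κ̄_t + 1), y_{t+1} = x_t − (1/L̄)∇f(x_t), x_{t+1} = y_{t+1} + β_t (y_{t+1} − y_t). Then (1 + 1/(√κ̄_t − 1)) V(x_{t+1}, y_{t+1}) − V(x_t, y_t) ≤ 0, where V(x, y) = f(y) − f(x*) + (m_t/2)‖x + √κ̄_t (x − y) − x*‖². -/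
/-!
Write `s = √κ̄` and `V` for the Lyapunov function. Since `1 + 1/(s - 1) = s/(s - 1)`, it suffices
to show `s V(x₁, y₁) ≤ (s - 1) V(x, y)`. The momentum step gives
`x₁ + s (x₁ - y₁) = (x - x*) + (s - 1)(x - y) - (s/L̄) ∇f(x) + x*`. Expanding the square, the
`‖∇f(x)‖²` term is paid for by the descent step `f(y₁) ≤ f(x) - ‖∇f(x)‖²/(2L̄)`, and the cross terms
with `∇f(x)` by strong convexity between `x` and `x*` and convexity between `x` and `y`, all with
matching coefficients because `m_t s² = L̄`. What is left is the convexity of `‖·‖²` along the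
line through `a = x - x*` with direction `c = x - y`: `s ‖a + (s - 1) c‖² ≤ ‖a‖² + (s - 1) ‖a + s c‖²`.
-/

open scoped RealInnerProductSpace

section
variable {E : Type*} [NormedAddCommGroup E] [InnerProductSpace ℝ E]

theorem gradient_step_le {f : E → ℝ} {x g : E} {L Lbar : ℝ}
    (hsmooth : ∀ y, f y ≤ f x + ⟪g, y - x⟫ + L / 2 * ‖y - x‖ ^ 2)
    (hL : L ≤ Lbar) (hLbar : 0 < Lbar) :
    f (x - (1 / Lbar) • g) ≤ f x - ‖g‖ ^ 2 / (2 * Lbar) := by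
  have h := hsmooth (x - (1 / Lbar) • g)
  rw [sub_sub_cancel_left, inner_neg_right, inner_smul_right, real_inner_self_eq_norm_sq,
    norm_neg, norm_smul, Real.norm_eq_abs, abs_of_pos (by positivity)] at h
  have hLg : L * (1 / Lbar * ‖g‖) ^ 2 ≤ Lbar * (1 / Lbar * ‖g‖) ^ 2 := by gcongr
  calc f (x - (1 / Lbar) • g)
      ≤ f x - 1 / Lbar * ‖g‖ ^ 2 + Lbar / 2 * (1 / Lbar * ‖g‖) ^ 2 := by linarith
    _ = f x - ‖g‖ ^ 2 / (2 * Lbar) := by field_simp; ring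

theorem sq_norm_add_sub_one_smul_le (a c : E) {s : ℝ} (hs : 1 ≤ s) :
    s * ‖a + (s - 1) • c‖ ^ 2 ≤ ‖a‖ ^ 2 + (s - 1) * ‖a + s • c‖ ^ 2 := by
  have key : ‖a‖ ^ 2 + (s - 1) * ‖a + s • c‖ ^ 2 - s * ‖a + (s - 1) • c‖ ^ 2
      = s * (s - 1) * ‖c‖ ^ 2 := by
    simp only [norm_add_sq_real, inner_smul_right, norm_smul, Real.norm_eq_abs, mul_pow, sq_abs]
    ring
  have : 0 ≤ s * (s - 1) * ‖c‖ ^ 2 :=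
    mul_nonneg (mul_nonneg (by linarith) (by linarith)) (sq_nonneg _)
  linarith

theorem momentum_add_smul_sub {x₁ y₁ y : E} {s : ℝ} (hs : s + 1 ≠ 0)
    (hx₁ : x₁ = y₁ + ((s - 1) / (s + 1)) • (y₁ - y)) :
    x₁ + s • (x₁ - y₁) = y₁ + (s - 1) • (y₁ - y) := by
  subst hx₁
  match_scalars <;> field_simp <;> ring

noncomputable def lyapunov (f : E → ℝ) (xstar : E) (μ s : ℝ) (x y : E) : ℝ :=
  f y - f xstar + μ / 2 * ‖x + s • (x - y) - xstar‖ ^ 2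

theorem lyapunov_momentum_step_le {f : E → ℝ} {x y g xstar x₁ y₁ : E} {L Lbar μ s : ℝ}
    (hsmooth : ∀ z, f z ≤ f x + ⟪g, z - x⟫ + L / 2 * ‖z - x‖ ^ 2)
    (hstrong : ∀ z, f x + ⟪g, z - x⟫ + μ / 2 * ‖z - x‖ ^ 2 ≤ f z)
    (hL : L ≤ Lbar) (hLbar : 0 < Lbar) (hs : μ * s ^ 2 = Lbar) (hs1 : 1 ≤ s)
    (hy₁ : y₁ = x - (1 / Lbar) • g) (hx₁ : x₁ = y₁ + ((s - 1) / (s + 1)) • (y₁ - y)) :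
    s * lyapunov f xstar μ s x₁ y₁ ≤ (s - 1) * lyapunov f xstar μ s x y := by
  have hμ : 0 < μ := pos_of_mul_pos_left (hs ▸ hLbar) (by positivity)
  have hz₁ : x₁ + s • (x₁ - y₁) - xstar
      = (x - xstar + (s - 1) • (x - y)) - (s / Lbar) • g := by
    rw [momentum_add_smul_sub (by linarith) hx₁, hy₁]
    module
  have hz : x + s • (x - y) - xstar = x - xstar + s • (x - y) := by abel
  have hdesc := hy₁ ▸ gradient_step_le hsmooth hL hLbar
  have hstar := hstrong xstar
  rw [← neg_sub, inner_neg_right, norm_neg] at hstar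
  have hconv : f x + ⟪g, y - x⟫ ≤ f y := by
    have := hstrong y
    have : 0 ≤ μ / 2 * ‖y - x‖ ^ 2 := by positivity
    linarith
  rw [← neg_sub, inner_neg_right] at hconv
  have hnorm := sq_norm_add_sub_one_smul_le (x - xstar) (x - y) hs1
  unfold lyapunov
  rw [hz₁, hz, norm_sub_sq_real, inner_smul_right, norm_smul, Real.norm_eq_abs, mul_pow, sq_abs,
    real_inner_comm, inner_add_right, inner_smul_right]
  -- `μ s (s/L̄) = 1` makes the gradient terms of the expanded square cancel.
  have ht : μ * s * (s / Lbar) = 1 := by rw [← hs]; field_simp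
  linear_combination s * hdesc + hstar + (s - 1) * hconv + μ / 2 * hnorm
    + (s / Lbar / 2 * ‖g‖ ^ 2 - ⟪g, x - xstar⟫ - (s - 1) * ⟪g, x - y⟫) * ht

end

theorem stmt6_general
    {d : ℕ}
    {L m : ℝ}
    (f : EuclideanSpace ℝ (Fin d) → ℝ)
    (hsmooth : ∀ x y : EuclideanSpace ℝ (Fin d),
      f y ≤ f x + ⟪gradient f x, y - x⟫ + L / 2 * ‖y - x‖ ^ 2)
    (hstrong : ∀ x y : EuclideanSpace ℝ (Fin d),
      f x + ⟪gradient f x, y - x⟫ + m / 2 * ‖y - x‖ ^ 2 ≤ f y)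
    (xstar : EuclideanSpace ℝ (Fin d))
    {Lbar : ℝ} (hLbarL : L ≤ Lbar)
    {mt : ℝ} (hmt0 : 0 < mt) (hmtm : mt ≤ m) (hmtL : mt < Lbar)
    (xt yt : EuclideanSpace ℝ (Fin d))
    (y1 : EuclideanSpace ℝ (Fin d)) (hy1 : y1 = xt - (1 / Lbar) • gradient f xt)
    (x1 : EuclideanSpace ℝ (Fin d))
    (hx1 : x1 = y1 +
      ((Real.sqrt (Lbar / mt) - 1) / (Real.sqrt (Lbar / mt) + 1)) • (y1 - yt)) :
    (1 + 1 / (Real.sqrt (Lbar / mt) - 1)) *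
        (f y1 - f xstar + mt / 2 * ‖x1 + Real.sqrt (Lbar / mt) • (x1 - y1) - xstar‖ ^ 2)
      - (f yt - f xstar + mt / 2 * ‖xt + Real.sqrt (Lbar / mt) • (xt - yt) - xstar‖ ^ 2)
      ≤ 0 := by
  set s := Real.sqrt (Lbar / mt)
  have hLbar : 0 < Lbar := hmt0.trans hmtL
  have hs : mt * s ^ 2 = Lbar := by
    rw [Real.sq_sqrt (by positivity)]
    field_simp
  have hs1 : 1 < s := Real.lt_sqrt_of_sq_lt (by rw [one_pow, one_lt_div hmt0]; exact hmtL)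
  have hstrong_mt : ∀ z, f xt + ⟪gradient f xt, z - xt⟫ + mt / 2 * ‖z - xt‖ ^ 2 ≤ f z :=
    fun z => (hstrong xt z).trans' (by gcongr)
  have hstep := lyapunov_momentum_step_le (xstar := xstar) (hsmooth xt) hstrong_mt hLbarL hLbar
    hs hs1.le hy1 hx1
  show (1 + 1 / (s - 1)) * lyapunov f xstar mt s x1 y1 - lyapunov f xstar mt s xt yt ≤ 0
  have hs_sub_one : s - 1 ≠ 0 := by linarith
  calc _ = (s * lyapunov f xstar mt s x1 y1 - (s - 1) * lyapunov f xstar mt s xt yt)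
        / (s - 1) := by field_simp; ring
    _ ≤ 0 := div_nonpos_of_nonpos_of_nonneg (by linarith) (by linarith)

/-- Accelerated descent of the Lyapunov function when the
estimate underestimates `m`: if `0 < m_t ≤ m`, `m_t < L̄`, `κ̄_t = L̄/m_t`,
`β_t = (√κ̄_t − 1)/(√κ̄_t + 1)`, `y_{t+1} = x_t − (1/L̄)∇f(x_t)`,
`x_{t+1} = y_{t+1} + β_t(y_{t+1} − y_t)`, then
`(1 + 1/(√κ̄_t − 1)) V(x_{t+1}, y_{t+1}) − V(x_t, y_t) ≤ 0`,
where `V(x, y) = f(y) − f(x*) + (m_t/2)‖x + √κ̄_t (x − y) − x*‖²`. -/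
theorem stmt6
    {d : ℕ} (hd : 1 ≤ d)
    {L m : ℝ} (hm : 0 < m) (hmL : m ≤ L)
    (f : EuclideanSpace ℝ (Fin d) → ℝ)
    (hdiff : Differentiable ℝ f)
    (hsmooth : ∀ x y : EuclideanSpace ℝ (Fin d),
      f y ≤ f x + ⟪gradient f x, y - x⟫ + L / 2 * ‖y - x‖ ^ 2)
    (hstrong : ∀ x y : EuclideanSpace ℝ (Fin d),
      f x + ⟪gradient f x, y - x⟫ + m / 2 * ‖y - x‖ ^ 2 ≤ f y)
    (xstar : EuclideanSpace ℝ (Fin d)) (hmin : ∀ z, f xstar ≤ f z)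
    {Lbar : ℝ} (hLbarL : L ≤ Lbar)
    {mt : ℝ} (hmt0 : 0 < mt) (hmtm : mt ≤ m) (hmtL : mt < Lbar)
    (xt yt : EuclideanSpace ℝ (Fin d))
    (y1 : EuclideanSpace ℝ (Fin d)) (hy1 : y1 = xt - (1 / Lbar) • gradient f xt)
    (x1 : EuclideanSpace ℝ (Fin d))
    (hx1 : x1 = y1 +
      ((Real.sqrt (Lbar / mt) - 1) / (Real.sqrt (Lbar / mt) + 1)) • (y1 - yt)) :
    (1 + 1 / (Real.sqrt (Lbar / mt) - 1)) *
        (f y1 - f xstar + mt / 2 * ‖x1 + Real.sqrt (Lbar / mt) • (x1 - y1) - xstar‖ ^ 2)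
      - (f yt - f xstar + mt / 2 * ‖xt + Real.sqrt (Lbar / mt) • (xt - yt) - xstar‖ ^ 2)
      ≤ 0 :=
  stmt6_general f hsmooth hstrong xstar hLbarL hmt0 hmtm hmtL xt yt y1 hy1 x1 hx1
end

section
/- Let d ≥ 1, let f ∈ F(L,m) with unique minimizer x*, and let L̄ ≥ L. For a > 0 define V_a(x, y) = f(y) − f(x*) + (a/2)‖x + √(L̄/a)(x − y) − x*‖². If 0 < b ≤ a and b < m, then for all x, y ∈ ℝ^d, V_b(x, y) ≤ (a/b)² V_a(x, y). -/
/-!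
At the minimizer the gradient vanishes, so strong convexity gives
`f y - f x* ≥ (m/2)‖y - x*‖² ≥ (b/2)‖y - x*‖²`. Writing `z_s = x + √(L̄/s)(x - y) - x*` and
`w = y - x*`, the three points are affinely related,
`(1 + √(L̄/a)) z_b = (1 + √(L̄/b)) z_a - (√(L̄/b) - √(L̄/a)) w`, and the triangle inequality
gives `√b ‖z_b‖ ≤ √a ‖z_a‖ + (√a - √b)‖w‖`. Squaring, and absorbing the cross term
thanks to `a² b (√a - √b)² ≤ (a² - b²)²`, `b² · b‖z_b‖² - a² · a‖z_a‖²` is at most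
`(a² - b²) b ‖w‖²`, which is paid for by `(a² - b²)(f y - f x*)`.
-/

open scoped RealInnerProductSpace

theorem gradient_eq_zero_of_isMin {E : Type*} [NormedAddCommGroup E] [InnerProductSpace ℝ E]
    [CompleteSpace E] {f : E → ℝ} {xstar : E} (hmin : ∀ z, f xstar ≤ f z) :
    gradient f xstar = 0 := by
  have : IsLocalMin f xstar := Filter.Eventually.of_forall hmin
  simp [gradient, this.fderiv_eq_zero]

theorem half_mul_sq_norm_sub_le_sub_of_isMin {E : Type*} [NormedAddCommGroup E]
    [InnerProductSpace ℝ E] [CompleteSpace E] {f : E → ℝ} {m : ℝ}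
    (hstrong : ∀ x y, f x + ⟪gradient f x, y - x⟫ + m / 2 * ‖y - x‖ ^ 2 ≤ f y)
    {xstar : E} (hmin : ∀ z, f xstar ≤ f z) (y : E) :
    m / 2 * ‖y - xstar‖ ^ 2 ≤ f y - f xstar := by
  have h := hstrong xstar y
  rw [gradient_eq_zero_of_isMin hmin, inner_zero_left] at h
  linarith

section Extrapolation

variable {E : Type*} [SeminormedAddCommGroup E] [NormedSpace ℝ E]

theorem one_add_mul_norm_extrapolate_le {s t : ℝ} (ht : 0 ≤ t) (hts : t ≤ s) (x y z : E) :
    (1 + t) * ‖x + s • (x - y) - z‖ ≤ (1 + s) * ‖x + t • (x - y) - z‖ + (s - t) * ‖y - z‖ := by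
  have hcomb : (1 + t) • (x + s • (x - y) - z)
      = (1 + s) • (x + t • (x - y) - z) - (s - t) • (y - z) := by
    module
  have h := norm_sub_le ((1 + s) • (x + t • (x - y) - z)) ((s - t) • (y - z))
  rwa [← hcomb, norm_smul, norm_smul, norm_smul, Real.norm_of_nonneg (by linarith),
    Real.norm_of_nonneg (by linarith), Real.norm_of_nonneg (by linarith)] at h

theorem mul_norm_extrapolate_le {p q k : ℝ} (hq : 0 < q) (hqp : q ≤ p) (hk : 0 ≤ k)
    (x y z : E) :
    q * ‖x + (k / q) • (x - y) - z‖ ≤ p * ‖x + (k / p) • (x - y) - z‖ + (p - q) * ‖y - z‖ := by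
  have hp : 0 < p := hq.trans_le hqp
  have h := one_add_mul_norm_extrapolate_le (div_nonneg hk hp.le)
    (div_le_div_of_nonneg_left hk hq hqp) x y z
  set Nq := ‖x + (k / q) • (x - y) - z‖
  set Np := ‖x + (k / p) • (x - y) - z‖
  set Nw := ‖y - z‖
  have hs : q * (k / q) = k := mul_div_cancel₀ k hq.ne'
  have ht : p * (k / p) = k := mul_div_cancel₀ k hp.ne'
  have hcleared : q * (p + k) * Nq ≤ p * (q + k) * Np + k * (p - q) * Nw := by
    linear_combination (p * q) * h + (-q * Nq - q * Nw) * ht + (p * Np + p * Nw) * hs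
  have hNp : 0 ≤ Np := norm_nonneg _
  have hNw : 0 ≤ Nw := norm_nonneg _
  refine le_of_mul_le_mul_left ?_ (by linarith : 0 < p + k)
  linarith [mul_le_mul_of_nonneg_right hqp (mul_nonneg hp.le hNp),
    mul_nonneg (mul_nonneg hp.le (sub_nonneg.2 hqp)) hNw]

theorem sqrt_mul_norm_extrapolate_le {a b : ℝ} (hb : 0 < b) (hba : b ≤ a) (c : ℝ) (x y z : E) :
    √b * ‖x + √(c / b) • (x - y) - z‖
      ≤ √a * ‖x + √(c / a) • (x - y) - z‖ + (√a - √b) * ‖y - z‖ := by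
  rw [Real.sqrt_div' c hb.le, Real.sqrt_div' c (hb.le.trans hba)]
  exact mul_norm_extrapolate_le (Real.sqrt_pos.2 hb) (Real.sqrt_le_sqrt hba)
    (Real.sqrt_nonneg c) x y z

end Extrapolation

theorem pow_four_mul_sq_le {p q A B Z : ℝ} (hq : 0 < q) (hqp : q ≤ p) (hZ : 0 ≤ Z)
    (hZAB : Z ≤ A + (p - q) * B) :
    q ^ 4 * Z ^ 2 ≤ p ^ 4 * A ^ 2 + (p ^ 4 - q ^ 4) * q ^ 2 * B ^ 2 := by
  rcases hqp.eq_or_lt with rfl | hlt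
  · simp only [sub_self, zero_mul, add_zero] at hZAB ⊢
    gcongr
  have hp : 0 < p := hq.trans hlt
  set δ := p ^ 4 - q ^ 4 with hδ_def
  have hδ0 : 0 < δ := by linarith [pow_lt_pow_left₀ hlt hq.le (by norm_num : 4 ≠ 0)]
  have hδ : p ^ 2 * q * (p - q) ≤ δ := by
    linarith [mul_nonneg (sub_nonneg.2 hqp) (show 0 ≤ p ^ 3 + p * q ^ 2 + q ^ 3 by positivity)]
  have hdisc : (p ^ 2 * q * (p - q)) ^ 2 ≤ δ ^ 2 :=
    pow_le_pow_left₀ (by have := sub_nonneg.2 hqp; positivity) hδ 2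
  have hsos : δ * (p ^ 4 * A ^ 2 + δ * q ^ 2 * B ^ 2 - q ^ 4 * (A + (p - q) * B) ^ 2)
      = (δ * A - q ^ 4 * (p - q) * B) ^ 2
        + q ^ 2 * (δ ^ 2 - (p ^ 2 * q * (p - q)) ^ 2) * B ^ 2 := by
    rw [hδ_def]; ring
  have hsq : q ^ 4 * Z ^ 2 ≤ q ^ 4 * (A + (p - q) * B) ^ 2 := by gcongr
  have hgap : 0 ≤ p ^ 4 * A ^ 2 + δ * q ^ 2 * B ^ 2 - q ^ 4 * (A + (p - q) * B) ^ 2 := by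
    refine nonneg_of_mul_nonneg_right ?_ hδ0
    rw [hsos]
    have := sub_nonneg.2 hdisc
    positivity
  linarith

theorem stmt7_general
    {d : ℕ}
    {m : ℝ}
    (f : EuclideanSpace ℝ (Fin d) → ℝ)
    (hstrong : ∀ x y : EuclideanSpace ℝ (Fin d),
      f x + ⟪gradient f x, y - x⟫ + m / 2 * ‖y - x‖ ^ 2 ≤ f y)
    (xstar : EuclideanSpace ℝ (Fin d)) (hmin : ∀ z, f xstar ≤ f z)
    {Lbar : ℝ}
    {a b : ℝ} (hb0 : 0 < b) (hba : b ≤ a) (hbm : b < m) :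
    ∀ x y : EuclideanSpace ℝ (Fin d),
      f y - f xstar + b / 2 * ‖x + Real.sqrt (Lbar / b) • (x - y) - xstar‖ ^ 2
        ≤ (a / b) ^ 2 *
          (f y - f xstar + a / 2 * ‖x + Real.sqrt (Lbar / a) • (x - y) - xstar‖ ^ 2) := by
  intro x y
  have ha0 : 0 < a := hb0.trans_le hba
  have hgrowth : b / 2 * ‖y - xstar‖ ^ 2 ≤ f y - f xstar :=
    le_trans (by gcongr) (half_mul_sq_norm_sub_le_sub_of_isMin hstrong hmin y)
  have hlyap := pow_four_mul_sq_le (Real.sqrt_pos.2 hb0) (Real.sqrt_le_sqrt hba)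
    (by positivity) (sqrt_mul_norm_extrapolate_le hb0 hba Lbar x y xstar)
  simp only [show 4 = 2 * 2 from rfl, pow_mul, mul_pow, Real.sq_sqrt hb0.le,
    Real.sq_sqrt ha0.le] at hlyap
  have hab : b ^ 2 ≤ a ^ 2 := by gcongr
  rw [div_pow, div_mul_eq_mul_div (a ^ 2) (b ^ 2), le_div_iff₀ (by positivity)]
  linarith [mul_le_mul_of_nonneg_left hgrowth (sub_nonneg.2 hab)]

/-- Controlled growth of the (NAG) Lyapunov function when the
strong-convexity estimate decreases: with
`V_a(x, y) = f(y) − f(x*) + (a/2)‖x + √(L̄/a)(x − y) − x*‖²`, if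
`0 < b ≤ a` and `b < m`, then `V_b(x, y) ≤ (a/b)² V_a(x, y)` for all `x, y`. -/
theorem stmt7
    {d : ℕ} (hd : 1 ≤ d)
    {L m : ℝ} (hm : 0 < m) (hmL : m ≤ L)
    (f : EuclideanSpace ℝ (Fin d) → ℝ)
    (hdiff : Differentiable ℝ f)
    (hsmooth : ∀ x y : EuclideanSpace ℝ (Fin d),
      f y ≤ f x + ⟪gradient f x, y - x⟫ + L / 2 * ‖y - x‖ ^ 2)
    (hstrong : ∀ x y : EuclideanSpace ℝ (Fin d),
      f x + ⟪gradient f x, y - x⟫ + m / 2 * ‖y - x‖ ^ 2 ≤ f y)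
    (xstar : EuclideanSpace ℝ (Fin d)) (hmin : ∀ z, f xstar ≤ f z)
    {Lbar : ℝ} (hLbarL : L ≤ Lbar)
    {a b : ℝ} (hb0 : 0 < b) (hba : b ≤ a) (hbm : b < m) :
    ∀ x y : EuclideanSpace ℝ (Fin d),
      f y - f xstar + b / 2 * ‖x + Real.sqrt (Lbar / b) • (x - y) - xstar‖ ^ 2
        ≤ (a / b) ^ 2 *
          (f y - f xstar + a / 2 * ‖x + Real.sqrt (Lbar / a) • (x - y) - xstar‖ ^ 2) :=
  stmt7_general f hstrong xstar hmin hb0 hba hbm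
end

section
/- Let d ≥ 1, let f ∈ F(L,m) with unique minimizer x*, let L̄ ≥ L with κ̄ = L̄/m > 1, and let a be a real number with m ≤ a ≤ L̄. Then for all x, y ∈ ℝ^d: f(y) − f(x*) + (a/2)‖x + √(L̄/a)(x − y) − x*‖² ≤ (a/m)·( W(x, y) + (ᾱ/√κ̄) U(x, y) ), where ᾱ = 1 − β(a)/θ with β(a) = (√(L̄/a) − 1)/(√(L̄/a) + 1) and θ = (√κ̄ − 1)/(√κ̄ + 1). -/
/-!
With `s = √(L̄/a)`, `k = √κ̄` (so `1 ≤ s ≤ k`), `u = x − x*`, `v = x − y` and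
`ᾱ = 2(k − s)/((s + 1)(k − 1))`, one has `‖u + s v‖² ≤ ‖u + k v‖² + ᾱ k ‖u − v‖²`: the difference
is a quadratic form in `(u, v)` whose coefficients satisfy the Cauchy–Schwarz discriminant
condition. Multiplying by `a/2` and writing `L̄ = m k²`, this bounds the distance terms, while
`a/m ≥ 1` and `ᾱ/k ≥ 0` absorb `f y − f x* ≥ 0`.
-/

open scoped RealInnerProductSpace

theorem one_sub_momentum_div_momentum {s k : ℝ} (hs : s + 1 ≠ 0) (hk : k - 1 ≠ 0) :
    1 - (s - 1) / (s + 1) / ((k - 1) / (k + 1)) = 2 * (k - s) / ((s + 1) * (k - 1)) := by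
  field_simp
  ring

theorem momentum_coeff_discriminant_le {s k : ℝ} (hs : 1 ≤ s) (hsk : s ≤ k) (hk : 1 < k) :
    (k - s - 2 * (k - s) / ((s + 1) * (k - 1)) * k) ^ 2
      ≤ 2 * (k - s) / ((s + 1) * (k - 1)) * k
          * (k ^ 2 - s ^ 2 + 2 * (k - s) / ((s + 1) * (k - 1)) * k) := by
  set D := (s + 1) * (k - 1)
  have hD : 0 < D := by positivity
  have cleared : ((k - s) * D - 2 * (k - s) * k) ^ 2
      ≤ 2 * (k - s) * k * ((k ^ 2 - s ^ 2) * D + 2 * (k - s) * k) := by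
    have hDle : 0 ≤ (k - s) ^ 2 * D * (2 * k * (k + s + 2) - D) :=
      mul_nonneg (mul_nonneg (sq_nonneg _) hD.le) (by nlinarith)
    linarith [show 2 * (k - s) * k * ((k ^ 2 - s ^ 2) * D + 2 * (k - s) * k)
      - ((k - s) * D - 2 * (k - s) * k) ^ 2 = (k - s) ^ 2 * D * (2 * k * (k + s + 2) - D) by ring]
  calc (k - s - 2 * (k - s) / D * k) ^ 2
      = ((k - s) * D - 2 * (k - s) * k) ^ 2 / D ^ 2 := by field_simp
    _ ≤ 2 * (k - s) * k * ((k ^ 2 - s ^ 2) * D + 2 * (k - s) * k) / D ^ 2 := by gcongr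
    _ = 2 * (k - s) / D * k * (k ^ 2 - s ^ 2 + 2 * (k - s) / D * k) := by field_simp

section InnerProductSpace

variable {E : Type*} [NormedAddCommGroup E] [InnerProductSpace ℝ E]

theorem norm_add_smul_sq_real (u v : E) (t : ℝ) :
    ‖u + t • v‖ ^ 2 = ‖u‖ ^ 2 + 2 * t * ⟪u, v⟫ + t ^ 2 * ‖v‖ ^ 2 := by
  rw [norm_add_sq_real, real_inner_smul_right, norm_smul, Real.norm_eq_abs, mul_pow, sq_abs]
  ring

theorem quadratic_form_nonneg {A B C : ℝ} (hA : 0 ≤ A) (hB : 0 ≤ B) (hC : C ^ 2 ≤ A * B)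
    (u v : E) : 0 ≤ A * ‖u‖ ^ 2 + B * ‖v‖ ^ 2 + 2 * C * ⟪u, v⟫ := by
  have hCS : ⟪u, v⟫ ^ 2 ≤ ‖u‖ ^ 2 * ‖v‖ ^ 2 := by
    rw [← mul_pow, ← sq_abs]
    exact pow_le_pow_left₀ (abs_nonneg _) (abs_real_inner_le_norm u v) 2
  have hP := sq_nonneg ‖u‖
  have hQ := sq_nonneg ‖v‖
  nlinarith [sq_nonneg (A * ‖u‖ ^ 2 - B * ‖v‖ ^ 2), mul_nonneg hA hP, mul_nonneg hB hQ,
    mul_nonneg (mul_nonneg hA hP) (mul_nonneg hB hQ)]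

theorem norm_add_smul_sq_le {s k : ℝ} (hs : 1 ≤ s) (hsk : s ≤ k) (hk : 1 < k) (u v : E) :
    ‖u + s • v‖ ^ 2 ≤ ‖u + k • v‖ ^ 2 + 2 * (k - s) / ((s + 1) * (k - 1)) * k * ‖u - v‖ ^ 2 := by
  set α := 2 * (k - s) / ((s + 1) * (k - 1))
  have hα : 0 ≤ α := by unfold α; apply div_nonneg <;> nlinarith
  have hform := quadratic_form_nonneg (mul_nonneg hα (by linarith : (0 : ℝ) ≤ k))
    (by nlinarith : 0 ≤ k ^ 2 - s ^ 2 + α * k) (momentum_coeff_discriminant_le hs hsk hk) u v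
  rw [norm_add_smul_sq_real, norm_add_smul_sq_real, norm_sub_sq_real]
  nlinarith

theorem gap_add_norm_sq_le_momentum_combination {m a Lbar s k F : ℝ} (hm : 0 < m)
    (hma : m ≤ a) (hs : 1 ≤ s) (hsk : s ≤ k) (hk : 1 < k) (hLbar : Lbar = m * k ^ 2)
    (hF : 0 ≤ F) (x y z : E) :
    F + a / 2 * ‖x + s • (x - y) - z‖ ^ 2
      ≤ a / m * ((F + m / 2 * ‖x + k • (x - y) - z‖ ^ 2)
          + 2 * (k - s) / ((s + 1) * (k - 1)) / k * (F + Lbar / 2 * ‖y - z‖ ^ 2)) := by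
  set α := 2 * (k - s) / ((s + 1) * (k - 1))
  have hα : 0 ≤ α / k := by unfold α; apply div_nonneg (div_nonneg _ _) <;> nlinarith
  have hnorm := norm_add_smul_sq_le hs hsk hk (x - z) (x - y)
  rw [show x - z + s • (x - y) = x + s • (x - y) - z by abel,
    show x - z + k • (x - y) = x + k • (x - y) - z by abel,
    show x - z - (x - y) = y - z by abel] at hnorm
  have hr : 1 ≤ a / m := (one_le_div hm).mpr hma
  calc F + a / 2 * ‖x + s • (x - y) - z‖ ^ 2
      ≤ a / m * F + a / m * (α / k) * F
          + a / 2 * (‖x + k • (x - y) - z‖ ^ 2 + α * k * ‖y - z‖ ^ 2) := by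
        gcongr ?_ + ?_
        · nlinarith [mul_nonneg (mul_nonneg (by linarith : 0 ≤ a / m) hα) hF]
        · exact mul_le_mul_of_nonneg_left hnorm (by linarith)
    _ = _ := by rw [hLbar]; field_simp; ring

end InnerProductSpace

theorem stmt9_general
    {d : ℕ}
    {m : ℝ} (hm : 0 < m)
    (f : EuclideanSpace ℝ (Fin d) → ℝ)
    (xstar : EuclideanSpace ℝ (Fin d)) (hmin : ∀ z, f xstar ≤ f z)
    {Lbar : ℝ} (hkappa : 1 < Lbar / m)
    {a : ℝ} (hma : m ≤ a) (haL : a ≤ Lbar) :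
    ∀ x y : EuclideanSpace ℝ (Fin d),
      f y - f xstar + a / 2 * ‖x + Real.sqrt (Lbar / a) • (x - y) - xstar‖ ^ 2
        ≤ (a / m) *
          ((f y - f xstar + m / 2 * ‖x + Real.sqrt (Lbar / m) • (x - y) - xstar‖ ^ 2) +
            ((1 - ((Real.sqrt (Lbar / a) - 1) / (Real.sqrt (Lbar / a) + 1)) /
                  ((Real.sqrt (Lbar / m) - 1) / (Real.sqrt (Lbar / m) + 1))) /
              Real.sqrt (Lbar / m)) *
              (f y - f xstar + Lbar / 2 * ‖y - xstar‖ ^ 2)) := by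
  intro x y
  have ha : 0 < a := hm.trans_le hma
  have hs : 1 ≤ Real.sqrt (Lbar / a) := Real.one_le_sqrt.mpr ((one_le_div ha).mpr haL)
  have hsk : Real.sqrt (Lbar / a) ≤ Real.sqrt (Lbar / m) :=
    Real.sqrt_le_sqrt (div_le_div_of_nonneg_left (by linarith) hm hma)
  have hk : 1 < Real.sqrt (Lbar / m) := Real.lt_sqrt_of_sq_lt (by simpa using hkappa)
  have hLbar : Lbar = m * Real.sqrt (Lbar / m) ^ 2 := by
    rw [Real.sq_sqrt (by positivity)]; field_simp
  rw [one_sub_momentum_div_momentum (by linarith) (by linarith)]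
  exact gap_add_norm_sq_le_momentum_combination hm hma hs hsk hk hLbar
    (sub_nonneg.mpr (hmin y)) x y xstar

/-- Bridging the NAG and GD Lyapunov functions
(Lemma `gc:lem:Lyapgd-2-Lyapacc-ascent`): for `m ≤ a ≤ L̄`,
`f(y) − f(x*) + (a/2)‖x + √(L̄/a)(x − y) − x*‖²
  ≤ (a/m)(W(x,y) + (ᾱ/√κ̄) U(x,y))`,
where `W(x,y) = f(y) − f(x*) + (m/2)‖x + √κ̄(x − y) − x*‖²`,
`U(x,y) = f(y) − f(x*) + (L̄/2)‖y − x*‖²`, `ᾱ = 1 − β(a)/θ`,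
`β(a) = (√(L̄/a) − 1)/(√(L̄/a) + 1)`, `θ = (√κ̄ − 1)/(√κ̄ + 1)`, `κ̄ = L̄/m`. -/
theorem stmt9
    {d : ℕ} (hd : 1 ≤ d)
    {L m : ℝ} (hm : 0 < m) (hmL : m ≤ L)
    (f : EuclideanSpace ℝ (Fin d) → ℝ)
    (hdiff : Differentiable ℝ f)
    (hsmooth : ∀ x y : EuclideanSpace ℝ (Fin d),
      f y ≤ f x + ⟪gradient f x, y - x⟫ + L / 2 * ‖y - x‖ ^ 2)
    (hstrong : ∀ x y : EuclideanSpace ℝ (Fin d),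
      f x + ⟪gradient f x, y - x⟫ + m / 2 * ‖y - x‖ ^ 2 ≤ f y)
    (xstar : EuclideanSpace ℝ (Fin d)) (hmin : ∀ z, f xstar ≤ f z)
    {Lbar : ℝ} (hLbarL : L ≤ Lbar) (hkappa : 1 < Lbar / m)
    {a : ℝ} (hma : m ≤ a) (haL : a ≤ Lbar) :
    ∀ x y : EuclideanSpace ℝ (Fin d),
      f y - f xstar + a / 2 * ‖x + Real.sqrt (Lbar / a) • (x - y) - xstar‖ ^ 2
        ≤ (a / m) *
          ((f y - f xstar + m / 2 * ‖x + Real.sqrt (Lbar / m) • (x - y) - xstar‖ ^ 2) +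
            ((1 - ((Real.sqrt (Lbar / a) - 1) / (Real.sqrt (Lbar / a) + 1)) /
                  ((Real.sqrt (Lbar / m) - 1) / (Real.sqrt (Lbar / m) + 1))) /
              Real.sqrt (Lbar / m)) *
              (f y - f xstar + Lbar / 2 * ‖y - xstar‖ ^ 2)) :=
  stmt9_general hm f xstar hmin hkappa hma haL
end

section
/- (i) Given σ > 1, set δ_σ = (σ − 1)²/(4σ). Then r_δ(κ) ≤ r_acc(σ'κ) for all δ ∈ (0, δ_σ], all σ' ≥ σ, and all κ ≥ 1 + δ. (ii) Conversely, given δ > 0, set σ_δ = 1 + 2δ + 2√(δ(1+δ)). Then r_{δ'}(κ) ≤ r_acc(σκ) for all δ' ∈ (0, δ], all σ ≥ σ_δ, and all κ ≥ 1 + δ'. -/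
/-!
With `a = √δ`, `b = √(1+δ)`, `c = √κ`, `d = √(κ-1)` one has `b² = 1 + a²`, `c² = 1 + d²`, and
`1 - r_acc(s²κ) = 1/(s c)` for `s = a + b`, while `1 - r_δ(κ) - 1/(s c)` is
`a (1 + s (c - d)) / (s c (c + b)) ≥ 0`. Hence `r_δ(κ) ≤ r_acc(σκ)` as soon as `σ ≥ s² = σ_δ`,
and `δ ≤ δ_σ` is exactly the condition `σ_δ ≤ σ` solved for `δ`.
-/

/-- The accelerated rate `r_acc(z) = (√z − 1)/√z`. -/
noncomputable def rAcc (z : ℝ) : ℝ := (Real.sqrt z - 1) / Real.sqrt z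

/-- `r_δ(z) = (√(z−1)/√z)·(√(z−1) + √δ)/(√z + √(1+δ))`. -/
noncomputable def rDelta (δ z : ℝ) : ℝ :=
  Real.sqrt (z - 1) / Real.sqrt z *
    ((Real.sqrt (z - 1) + Real.sqrt δ) / (Real.sqrt z + Real.sqrt (1 + δ)))

open Real

noncomputable def sigmaOfDelta (δ : ℝ) : ℝ := 1 + 2 * δ + 2 * √(δ * (1 + δ))

noncomputable def deltaOfSigma (σ : ℝ) : ℝ := (σ - 1) ^ 2 / (4 * σ)

lemma sigmaOfDelta_eq_sq {δ : ℝ} (hδ : 0 ≤ δ) : sigmaOfDelta δ = (√δ + √(1 + δ)) ^ 2 := by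
  rw [sigmaOfDelta, add_sq, sq_sqrt hδ, sq_sqrt (by linarith), sqrt_mul hδ]
  ring

lemma sigmaOfDelta_le_sigmaOfDelta {δ δ' : ℝ} (hδ' : 0 ≤ δ') (h : δ' ≤ δ) :
    sigmaOfDelta δ' ≤ sigmaOfDelta δ := by
  have : √(δ' * (1 + δ')) ≤ √(δ * (1 + δ)) := sqrt_le_sqrt (by nlinarith)
  unfold sigmaOfDelta
  linarith

lemma sigmaOfDelta_le_of_le_deltaOfSigma {σ δ : ℝ} (hσ : 1 < σ) (h : δ ≤ deltaOfSigma σ) :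
    sigmaOfDelta δ ≤ σ := by
  have h4 : 4 * σ * δ ≤ (σ - 1) ^ 2 := by
    rw [deltaOfSigma, le_div_iff₀ (by linarith)] at h
    linarith
  have h2 : 2 * δ ≤ σ - 1 := by nlinarith
  have hroot : √(δ * (1 + δ)) ≤ (σ - 1 - 2 * δ) / 2 :=
    sqrt_le_iff.2 ⟨by linarith, by nlinarith⟩
  unfold sigmaOfDelta
  linarith

lemma rAcc_le_rAcc {x y : ℝ} (hx : 0 < x) (hxy : x ≤ y) : rAcc x ≤ rAcc y := by
  have hsx : 0 < √x := sqrt_pos.2 hx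
  have hsxy : √x ≤ √y := sqrt_le_sqrt hxy
  rw [rAcc, rAcc, div_le_div_iff₀ hsx (hsx.trans_le hsxy)]
  nlinarith

lemma rDelta_le_rAcc_sigmaOfDelta_mul {δ κ : ℝ} (hδ : 0 ≤ δ) (hκ : 1 ≤ κ) :
    rDelta δ κ ≤ rAcc (sigmaOfDelta δ * κ) := by
  set a := √δ
  set b := √(1 + δ)
  set c := √κ
  set d := √(κ - 1)
  have ha : 0 ≤ a := sqrt_nonneg _
  have hb : 1 ≤ b := one_le_sqrt.2 (by linarith)
  have hc : 1 ≤ c := one_le_sqrt.2 hκ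
  have hdc : d ≤ c := sqrt_le_sqrt (by linarith)
  have hb2 : b ^ 2 = 1 + a ^ 2 := by rw [sq_sqrt (by linarith), sq_sqrt hδ]
  have hd2 : d ^ 2 = c ^ 2 - 1 := by rw [sq_sqrt (by linarith), sq_sqrt (by linarith)]
  have hsc : √(sigmaOfDelta δ * κ) = (a + b) * c := by
    rw [sigmaOfDelta_eq_sq hδ, sqrt_mul (sq_nonneg _), sqrt_sq (by positivity)]
  have hsc1 : 1 ≤ (a + b) * c := by nlinarith
  rw [rDelta, rAcc, hsc, div_mul_div_comm, div_le_div_iff₀ (by positivity) (by positivity)]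
  have key : ((a + b) * c - 1) * (c * (c + b)) - d * (d + a) * ((a + b) * c)
      = c * (a * ((a + b) * (c - d) + 1)) := by
    linear_combination c ^ 2 * hb2 - (a + b) * c * hd2
  have : 0 ≤ c * (a * ((a + b) * (c - d) + 1)) := by
    have : 0 ≤ (a + b) * (c - d) := mul_nonneg (by linarith) (by linarith)
    positivity
  linarith

lemma rDelta_le_rAcc_mul {δ σ κ : ℝ} (hδ : 0 ≤ δ) (hκ : 1 ≤ κ) (hσ : sigmaOfDelta δ ≤ σ) :
    rDelta δ κ ≤ rAcc (σ * κ) := by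
  have hpos : 0 < sigmaOfDelta δ := by
    rw [sigmaOfDelta_eq_sq hδ]
    exact pow_pos (add_pos_of_nonneg_of_pos (sqrt_nonneg _) (sqrt_pos.2 (by linarith))) 2
  exact (rDelta_le_rAcc_sigmaOfDelta_mul hδ hκ).trans
    (rAcc_le_rAcc (by positivity) (mul_le_mul_of_nonneg_right hσ (by linarith)))

/-- (Lemma `la:lem:rhoeps-leq-racc`.)
(i) Given `σ > 1` and `δ_σ = (σ − 1)²/(4σ)`, `r_δ(κ) ≤ r_acc(σ'κ)` for all
`δ ∈ (0, δ_σ]`, `σ' ≥ σ`, `κ ≥ 1 + δ`.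
(ii) Given `δ > 0` and `σ_δ = 1 + 2δ + 2√(δ(1+δ))`, `r_{δ'}(κ) ≤ r_acc(σκ)`
for all `δ' ∈ (0, δ]`, `σ ≥ σ_δ`, `κ ≥ 1 + δ'`. -/
theorem stmt16 :
    (∀ σ : ℝ, 1 < σ → ∀ δ σ' κ : ℝ,
      0 < δ → δ ≤ (σ - 1) ^ 2 / (4 * σ) → σ ≤ σ' → 1 + δ ≤ κ →
        rDelta δ κ ≤ rAcc (σ' * κ)) ∧
    (∀ δ : ℝ, 0 < δ → ∀ δ' σ κ : ℝ,
      0 < δ' → δ' ≤ δ → 1 + 2 * δ + 2 * Real.sqrt (δ * (1 + δ)) ≤ σ → 1 + δ' ≤ κ →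
        rDelta δ' κ ≤ rAcc (σ * κ)) := by
  constructor
  · intro σ hσ δ σ' κ hδ hδσ hσσ' hκ
    exact rDelta_le_rAcc_mul hδ.le (by linarith)
      ((sigmaOfDelta_le_of_le_deltaOfSigma hσ hδσ).trans hσσ')
  · intro δ _ δ' σ κ hδ' hδ'δ hσ hκ
    exact rDelta_le_rAcc_mul hδ'.le (by linarith)
      ((sigmaOfDelta_le_sigmaOfDelta hδ'.le hδ'δ).trans hσ)
end

section
/- Let δ_u > 0 and δ_ℓ > 0, and define σ_φ(δ_u, δ_ℓ, κ) = 1/((1 − r_φ(δ_u, δ_ℓ, κ)²)² κ) for κ ≥ 1 + δ_ℓ. Then: (i) r_φ(δ_u, δ_ℓ, κ)² ≤ r_acc(σ_φ(δ_u, δ_ℓ, κ)·κ) for all κ ≥ 1 + δ_ℓ; (ii) the function κ ↦ σ_φ(δ_u, δ_ℓ, κ) is bounded on [1 + δ_ℓ, ∞); and (iii) its limit as κ → ∞ equals 1/(4(√(δ_u + δ_ℓ + δ_u δ_ℓ) − √(δ_u(1 + δ_ℓ)))²). -/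
/-- `r_φ(δ_u, δ_ℓ, κ) = (κ − (1+δ_ℓ) + √((κ − (1+δ_ℓ))·δ_u(1+δ_ℓ)))
      / (κ − 1 + √((κ − 1)(δ_u + δ_ℓ + δ_u δ_ℓ)))`. -/
noncomputable def rPhi (δu δl κ : ℝ) : ℝ :=
  (κ - (1 + δl) + Real.sqrt ((κ - (1 + δl)) * (δu * (1 + δl)))) /
    (κ - 1 + Real.sqrt ((κ - 1) * (δu + δl + δu * δl)))

/-- `σ_φ(δ_u, δ_ℓ, κ) = 1/((1 − r_φ(δ_u, δ_ℓ, κ)²)² κ)`. -/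
noncomputable def sigmaPhi (δu δl κ : ℝ) : ℝ :=
  1 / ((1 - rPhi δu δl κ ^ 2) ^ 2 * κ)

/-
Write `a = δ_u(1+δ_ℓ)`, `b = a + δ_ℓ`, `p = √((κ-1-δ_ℓ)a)` and `q = √((κ-1)b)`, so that
`1 - r_φ = (δ_ℓ + q - p)/(κ - 1 + q)`. Part (i) is an identity: `σ_φ κ = 1/(1 - r_φ²)²` and
`r_acc(1/(1-s)²) = s`. Since `q² - p² ≥ δ_ℓ(κ-1)` and `p ≤ q`, we get `2q(q-p) ≥ δ_ℓ(κ-1)`, hence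
`1 - r_φ ≥ δ_ℓ/(2q) ≥ δ_ℓ/(2√(κb))`; as `σ_φ ≤ 1/((1-r_φ)²κ)`, this bounds `σ_φ` by `4b/δ_ℓ²`.
For the limit, `σ_φ = 1/((√κ(1-r_φ))²(1+r_φ)²)` with `√κ(1-r_φ) → √b - √a` and `r_φ → 1`.
-/

open Filter Topology

lemma rAcc_one_div_one_sub_sq {s : ℝ} (hs : s < 1) : rAcc (1 / (1 - s) ^ 2) = s := by
  have h : 0 < 1 - s := by linarith
  rw [← one_div_pow, rAcc, Real.sqrt_sq (by positivity)]
  field_simp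
  ring

lemma sub_le_two_mul_sqrt_mul_sub_sqrt {x y : ℝ} (hy : 0 ≤ y) (hyx : y ≤ x) :
    x - y ≤ 2 * √x * (√x - √y) := by
  have hsq : √y ≤ √x := Real.sqrt_le_sqrt hyx
  calc x - y = (√x + √y) * (√x - √y) := by
        rw [← sq_sub_sq, Real.sq_sqrt (hy.trans hyx), Real.sq_sqrt hy]
    _ ≤ 2 * √x * (√x - √y) := by gcongr; linarith

lemma tendsto_sub_div_self_atTop (c : ℝ) :
    Tendsto (fun κ : ℝ => (κ - c) / κ) atTop (𝓝 1) := by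
  have h : Tendsto (fun κ : ℝ => 1 - c / κ) atTop (𝓝 (1 - 0)) :=
    tendsto_const_nhds.sub (tendsto_const_nhds.div_atTop tendsto_id)
  rw [sub_zero] at h
  refine h.congr' ?_
  filter_upwards [eventually_gt_atTop 0] with κ hκ
  field_simp

lemma tendsto_sqrt_sub_mul_div_sqrt_atTop (c d : ℝ) :
    Tendsto (fun κ : ℝ => √((κ - c) * d) / √κ) atTop (𝓝 √d) := by
  have h := (((tendsto_sub_div_self_atTop c).mul_const d).sqrt)
  rw [one_mul] at h
  refine h.congr' ?_
  filter_upwards [eventually_ge_atTop 0] with κ hκ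
  rw [← Real.sqrt_div' _ hκ, div_mul_eq_mul_div]

section rPhi

variable {δu δl κ : ℝ}

lemma rPhi_nonneg (hδl : 0 ≤ δl) (hκ : 1 + δl ≤ κ) : 0 ≤ rPhi δu δl κ :=
  div_nonneg (by linarith [Real.sqrt_nonneg ((κ - (1 + δl)) * (δu * (1 + δl)))])
    (by linarith [Real.sqrt_nonneg ((κ - 1) * (δu + δl + δu * δl))])

lemma one_sub_rPhi (hκ : 1 < κ) :
    1 - rPhi δu δl κ =
      (δl + √((κ - 1) * (δu + δl + δu * δl)) - √((κ - (1 + δl)) * (δu * (1 + δl)))) /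
        (κ - 1 + √((κ - 1) * (δu + δl + δu * δl))) := by
  have hD : 0 < κ - 1 + √((κ - 1) * (δu + δl + δu * δl)) := by
    linarith [Real.sqrt_nonneg ((κ - 1) * (δu + δl + δu * δl))]
  rw [rPhi, eq_div_iff hD.ne', sub_mul, div_mul_cancel₀ _ hD.ne']
  ring

lemma le_two_mul_sqrt_mul_one_sub_rPhi (hδu : 0 ≤ δu) (hδl : 0 < δl) (hκ : 1 + δl ≤ κ) :
    δl ≤ 2 * √((κ - 1) * (δu + δl + δu * δl)) * (1 - rPhi δu δl κ) := by
  set p := √((κ - (1 + δl)) * (δu * (1 + δl)))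
  set q := √((κ - 1) * (δu + δl + δu * δl))
  have hq : 0 ≤ q := Real.sqrt_nonneg _
  have ha : 0 ≤ δu * (1 + δl) := by positivity
  have hsq_gap : (κ - 1) * δl ≤
      (κ - 1) * (δu + δl + δu * δl) - (κ - (1 + δl)) * (δu * (1 + δl)) := by
    nlinarith [mul_nonneg hδl.le ha]
  have hgap : (κ - 1) * δl ≤ 2 * q * (q - p) :=
    hsq_gap.trans (sub_le_two_mul_sqrt_mul_sub_sqrt (mul_nonneg (by linarith) ha) (by nlinarith))
  rw [one_sub_rPhi (by linarith), mul_div_assoc', le_div_iff₀ (by linarith)]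
  nlinarith

lemma rPhi_lt_one (hδu : 0 ≤ δu) (hδl : 0 < δl) (hκ : 1 + δl ≤ κ) : rPhi δu δl κ < 1 := by
  have h := le_two_mul_sqrt_mul_one_sub_rPhi hδu hδl hκ
  by_contra! hr
  nlinarith [Real.sqrt_nonneg ((κ - 1) * (δu + δl + δu * δl))]

lemma sigmaPhi_mul_self (hκ : κ ≠ 0) :
    sigmaPhi δu δl κ * κ = 1 / (1 - rPhi δu δl κ ^ 2) ^ 2 := by
  rw [sigmaPhi]
  field_simp

lemma sigmaPhi_eq_one_div (hκ : 0 ≤ κ) :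
    sigmaPhi δu δl κ =
      1 / ((√κ * (1 - rPhi δu δl κ)) ^ 2 * (1 + rPhi δu δl κ) ^ 2) := by
  rw [sigmaPhi, mul_pow, Real.sq_sqrt hκ]
  ring_nf

lemma rPhi_sq_le_rAcc (hδu : 0 ≤ δu) (hδl : 0 < δl) (hκ : 1 + δl ≤ κ) :
    rPhi δu δl κ ^ 2 ≤ rAcc (sigmaPhi δu δl κ * κ) := by
  have hr0 := rPhi_nonneg (δu := δu) hδl.le hκ
  have hr1 := rPhi_lt_one hδu hδl hκ
  rw [sigmaPhi_mul_self (by linarith), rAcc_one_div_one_sub_sq (by nlinarith)]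

lemma sigmaPhi_le (hδu : 0 ≤ δu) (hδl : 0 < δl) (hκ : 1 + δl ≤ κ) :
    sigmaPhi δu δl κ ≤ 4 * (δu + δl + δu * δl) / δl ^ 2 := by
  set b := δu + δl + δu * δl
  set r := rPhi δu δl κ
  have hr0 : 0 ≤ r := rPhi_nonneg hδl.le hκ
  have hr1 : r < 1 := rPhi_lt_one hδu hδl hκ
  have hb : 0 < b := by positivity
  have hq2 : √((κ - 1) * b) ^ 2 ≤ κ * b := by
    rw [Real.sq_sqrt (by nlinarith)]
    nlinarith
  have hgap : δl ^ 2 ≤ 4 * b * κ * (1 - r) ^ 2 :=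
    calc δl ^ 2 ≤ 4 * √((κ - 1) * b) ^ 2 * (1 - r) ^ 2 := by
          nlinarith [le_two_mul_sqrt_mul_one_sub_rPhi hδu hδl hκ]
      _ ≤ 4 * b * κ * (1 - r) ^ 2 := by
          nlinarith [mul_le_mul_of_nonneg_left hq2 (sq_nonneg (1 - r))]
  have hmono : (1 - r) ^ 2 ≤ (1 - r ^ 2) ^ 2 := by gcongr; nlinarith
  calc sigmaPhi δu δl κ = 1 / ((1 - r ^ 2) ^ 2 * κ) := rfl
    _ ≤ 1 / (δl ^ 2 / (4 * b)) := by
        gcongr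
        rw [div_le_iff₀ (by positivity)]
        nlinarith
    _ = 4 * b / δl ^ 2 := one_div_div _ _

lemma tendsto_sqrt_mul_one_sub_rPhi_atTop :
    Tendsto (fun κ => √κ * (1 - rPhi δu δl κ)) atTop
      (𝓝 (√(δu + δl + δu * δl) - √(δu * (1 + δl)))) := by
  have hq := tendsto_sqrt_sub_mul_div_sqrt_atTop 1 (δu + δl + δu * δl)
  have hp := tendsto_sqrt_sub_mul_div_sqrt_atTop (1 + δl) (δu * (1 + δl))
  have h := ((((tendsto_const_nhds (x := δl)).div_atTop Real.tendsto_sqrt_atTop).add hq).sub hp).div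
    ((tendsto_sub_div_self_atTop 1).add (hq.div_atTop Real.tendsto_sqrt_atTop)) (by norm_num)
  simp only [zero_add, add_zero, div_one] at h
  refine h.congr' ?_
  filter_upwards [eventually_gt_atTop 1] with κ hκ
  have hD : 0 < κ - 1 + √((κ - 1) * (δu + δl + δu * δl)) := by
    linarith [Real.sqrt_nonneg ((κ - 1) * (δu + δl + δu * δl))]
  rw [Pi.div_apply, one_sub_rPhi hκ]
  generalize √((κ - 1) * (δu + δl + δu * δl)) = q at hD ⊢
  generalize √((κ - (1 + δl)) * (δu * (1 + δl))) = p
  have hs0 : 0 < √κ := Real.sqrt_pos.mpr (by linarith)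
  have hs : √κ ^ 2 = κ := Real.sq_sqrt (by linarith)
  generalize √κ = s at hs0 hs ⊢
  subst hs
  field_simp

lemma tendsto_rPhi_atTop : Tendsto (rPhi δu δl) atTop (𝓝 1) := by
  have h := (tendsto_sqrt_mul_one_sub_rPhi_atTop (δu := δu) (δl := δl)).div_atTop
    Real.tendsto_sqrt_atTop
  have h' := tendsto_const_nhds (x := (1 : ℝ)).sub h
  rw [sub_zero] at h'
  refine h'.congr' ?_
  filter_upwards [eventually_gt_atTop 0] with κ hκ
  field_simp [(Real.sqrt_pos.mpr hκ).ne']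
  ring

lemma tendsto_sigmaPhi_atTop (hδu : 0 ≤ δu) (hδl : 0 < δl) :
    Tendsto (sigmaPhi δu δl) atTop
      (𝓝 (1 / (4 * (√(δu + δl + δu * δl) - √(δu * (1 + δl))) ^ 2))) := by
  have hlt : √(δu * (1 + δl)) < √(δu + δl + δu * δl) :=
    Real.sqrt_lt_sqrt (by positivity) (by linarith)
  have hne : (√(δu + δl + δu * δl) - √(δu * (1 + δl))) ^ 2 * (1 + 1) ^ 2 ≠ 0 := by
    have := sub_pos.mpr hlt
    positivity
  have h := tendsto_const_nhds (x := (1 : ℝ)).div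
    ((tendsto_sqrt_mul_one_sub_rPhi_atTop.pow 2).mul
      ((tendsto_const_nhds.add (tendsto_rPhi_atTop (δu := δu) (δl := δl))).pow 2)) hne
  rw [show ((1 : ℝ) + 1) ^ 2 = 4 by norm_num, mul_comm _ (4 : ℝ)] at h
  refine h.congr' ?_
  filter_upwards [eventually_ge_atTop 0] with κ hκ
  exact (sigmaPhi_eq_one_div hκ).symm

end rPhi

/-- (Lemma `la:lem:rphi-sq-leq-racc`.) For `δ_u, δ_ℓ > 0`:
(i) `r_φ(δ_u, δ_ℓ, κ)² ≤ r_acc(σ_φ(δ_u, δ_ℓ, κ)·κ)` for all `κ ≥ 1 + δ_ℓ`;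
(ii) `κ ↦ σ_φ(δ_u, δ_ℓ, κ)` is bounded on `[1 + δ_ℓ, ∞)`;
(iii) `σ_φ(δ_u, δ_ℓ, κ) → 1/(4(√(δ_u + δ_ℓ + δ_u δ_ℓ) − √(δ_u(1+δ_ℓ)))²)`
as `κ → ∞`. -/
theorem stmt18 {δu δl : ℝ} (hδu : 0 < δu) (hδl : 0 < δl) :
    (∀ κ : ℝ, 1 + δl ≤ κ → rPhi δu δl κ ^ 2 ≤ rAcc (sigmaPhi δu δl κ * κ)) ∧
    (∃ C : ℝ, ∀ κ : ℝ, 1 + δl ≤ κ → sigmaPhi δu δl κ ≤ C) ∧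
    Filter.Tendsto (fun κ : ℝ => sigmaPhi δu δl κ) Filter.atTop
      (nhds (1 / (4 * (Real.sqrt (δu + δl + δu * δl) -
        Real.sqrt (δu * (1 + δl))) ^ 2))) :=
  ⟨fun _ hκ => rPhi_sq_le_rAcc hδu.le hδl hκ,
    ⟨_, fun _ hκ => sigmaPhi_le hδu.le hδl hκ⟩,
    tendsto_sigmaPhi_atTop hδu.le hδl⟩
end
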